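/- arXiv:2007.15748 — 10 statements merged into one kernel-verified Lean document; each statement's English description precedes it below -/
import Mathlib

section
/- For any instance of the stable matching problem with strict preferences, a stable matching exists. -/
/-- A stable matching instance with `n` boys and `n` girls. `rB b g` is the rank
boy `b` assigns to girl `g` (lower rank = more preferred); `rG g b` similarly. -/
structure SMInst (n : ℕ) where
  rB : Fin n → Fin n → Fin n
  rG : Fin n → Fin n → Fin n
  hB : ∀ b, Function.Injective (rB b)
  hG : ∀ g, Function.Injective (rG g)

namespace SMInst
variable {n : ℕ} (I : SMInst n)

/-- `(b,g)` is a blocking pair for the matching `μ` (boys to girls). -/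
def Blocking (μ : Equiv.Perm (Fin n)) (b g : Fin n) : Prop :=
  I.rB b g < I.rB b (μ b) ∧ I.rG g b < I.rG g (μ.symm g)

/-- A matching is stable if it has no blocking pair. -/
def Stable (μ : Equiv.Perm (Fin n)) : Prop := ∀ b g, ¬ I.Blocking μ b g

/-- `μ0` is the girl-optimal stable matching. -/
def GirlOptimal (μ0 : Equiv.Perm (Fin n)) : Prop :=
  I.Stable μ0 ∧ ∀ μ, I.Stable μ → ∀ g, I.rG g (μ0.symm g) ≤ I.rG g (μ.symm g)

/-- `b` is girl `g`'s best stable partner. -/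
def IsBestPartner (g b : Fin n) : Prop :=
  (∃ μ, I.Stable μ ∧ μ b = g) ∧ ∀ μ, I.Stable μ → I.rG g b ≤ I.rG g (μ.symm g)

/-- A coalition `F` of girls is winning (relative to the girl-optimal matching `μ0`)
if the unique stable matching giving every girl in `F` her best stable partner is `μ0`. -/
def Winning (μ0 : Equiv.Perm (Fin n)) (F : Finset (Fin n)) : Prop :=
  {μ : Equiv.Perm (Fin n) | I.Stable μ ∧ ∀ g ∈ F, I.IsBestPartner g (μ.symm g)} = {μ0}

/-- `μ` is a minimal element of the poset of stable matchings (ordered by the boys'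
preferences) with the girl-optimal matching `μ0` removed. -/
def MinimalAboveOpt (μ0 μ : Equiv.Perm (Fin n)) : Prop :=
  I.Stable μ ∧ μ ≠ μ0 ∧
    ∀ ν, I.Stable ν → ν ≠ μ0 → (∀ b, I.rB b (μ b) ≤ I.rB b (ν b)) → ν = μ

/-- The set of girls not matched to their best stable partner in `μ`. -/
def U (μ : Equiv.Perm (Fin n)) : Set (Fin n) :=
  {g | ¬ I.IsBestPartner g (μ.symm g)}

end SMInst

namespace StableAux

variable {n : ℕ} (I : SMInst n)

/-- The suitors of girl `g` when each boy `b` has proposed to his top `s b` girls. -/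
def suit (s : Fin n → ℕ) (g : Fin n) : Finset (Fin n) :=
  Finset.univ.filter (fun b => (I.rB b g : ℕ) < s b)

lemma mem_suit {s : Fin n → ℕ} {g b : Fin n} :
    b ∈ suit I s g ↔ (I.rB b g : ℕ) < s b := by
  simp [suit]

/-- `b` is girl `g`'s fiancé: her favorite among her suitors. -/
def IsFia (s : Fin n → ℕ) (g b : Fin n) : Prop :=
  b ∈ suit I s g ∧ ∀ b' ∈ suit I s g, I.rG g b ≤ I.rG g b'

def Engaged (s : Fin n → ℕ) (b : Fin n) : Prop := ∃ g, IsFia I s g b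

/-- Invariant of the deferred-acceptance process: nobody has proposed more than `n`
times, and each fiancé is the fiancé only of the last girl he proposed to. -/
def Inv (s : Fin n → ℕ) : Prop :=
  (∀ b, s b ≤ n) ∧ ∀ b g, IsFia I s g b → (I.rB b g : ℕ) + 1 = s b

lemma fia_unique {s : Fin n → ℕ} {g b b' : Fin n}
    (h : IsFia I s g b) (h' : IsFia I s g b') : b = b' :=
  I.hG g (le_antisymm (h.2 b' h'.1) (h'.2 b h.1))

lemma all_engaged_of_nonempty {s : Fin n → ℕ} (hinv : Inv I s)
    (h : ∀ g, (suit I s g).Nonempty) : ∀ b, Engaged I s b := by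
  classical
  choose f hf1 hf2 using fun g =>
    Finset.exists_min_image (suit I s g) (fun b => I.rG g b) (h g)
  have hinj : Function.Injective f := by
    intro g1 g2 he
    have e1 := hinv.2 (f g1) g1 ⟨hf1 g1, hf2 g1⟩
    have e2 := hinv.2 (f g2) g2 ⟨hf1 g2, hf2 g2⟩
    rw [he] at e1
    have hval : (I.rB (f g2) g1 : ℕ) = (I.rB (f g2) g2 : ℕ) := by omega
    exact I.hB (f g2) (Fin.val_injective hval)
  have hsurj : Function.Surjective f := Finite.injective_iff_surjective.mp hinj
  intro b
  obtain ⟨g, hg⟩ := hsurj b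
  exact ⟨g, hg ▸ ⟨hf1 g, hf2 g⟩⟩

lemma lt_of_unengaged {s : Fin n → ℕ} {b : Fin n} (hinv : Inv I s)
    (hb : ¬ Engaged I s b) : s b < n := by
  by_contra h
  have hsb : s b = n := le_antisymm (hinv.1 b) (not_lt.mp h)
  have hne : ∀ g, (suit I s g).Nonempty := fun g =>
    ⟨b, mem_suit I |>.mpr (by have := (I.rB b g).isLt; omega)⟩
  exact hb (all_engaged_of_nonempty I hinv hne b)

lemma step {s : Fin n → ℕ} {b : Fin n} (hinv : Inv I s) (hb : ¬ Engaged I s b) :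
    Inv I (Function.update s b (s b + 1)) := by
  classical
  set s' := Function.update s b (s b + 1) with hs'
  have hle : ∀ b', s b' ≤ s' b' := by
    intro b'
    by_cases h : b' = b
    · subst h; simp [hs']
    · simp [hs', Function.update_of_ne h]
  have hsub : ∀ g, suit I s g ⊆ suit I s' g := by
    intro g b' hb'
    rw [mem_suit] at hb' ⊢
    exact lt_of_lt_of_le hb' (hle b')
  constructor
  · intro b'
    by_cases h : b' = b
    · subst h
      simp only [hs', Function.update_self]
      exact lt_of_unengaged I hinv hb
    · simp only [hs', Function.update_of_ne h]
      exact hinv.1 b'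
  · intro b' g hfia'
    by_cases h : b' = b
    · subst h
      have hmem : (I.rB b' g : ℕ) < s b' + 1 := by
        have := (mem_suit I).mp hfia'.1
        simpa [hs'] using this
      have hnlt : ¬ (I.rB b' g : ℕ) < s b' := by
        intro hlt
        have hmem0 : b' ∈ suit I s g := (mem_suit I).mpr hlt
        have hnf : ¬ IsFia I s g b' := fun hh => hb ⟨g, hh⟩
        rw [IsFia] at hnf
        push_neg at hnf
        obtain ⟨b'', hb''mem, hb''lt⟩ := hnf hmem0
        exact absurd (hfia'.2 b'' (hsub g hb''mem)) (not_le.mpr hb''lt)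
      simp only [hs', Function.update_self]
      omega
    · have hs'b' : s' b' = s b' := Function.update_of_ne h _ s
      have hmem : b' ∈ suit I s g := by
        rw [mem_suit, ← hs'b']
        exact (mem_suit I).mp hfia'.1
      have hfia : IsFia I s g b' :=
        ⟨hmem, fun b'' hb'' => hfia'.2 b'' (hsub g hb'')⟩
      rw [hs'b']
      exact hinv.2 b' g hfia

lemma run : ∀ (k : ℕ) (s : Fin n → ℕ), Inv I s → n * n ≤ k + ∑ b, s b →
    ∃ s', Inv I s' ∧ ∀ b, Engaged I s' b := by
  intro k
  induction k with
  | zero =>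
    intro s hinv hsum
    refine ⟨s, hinv, ?_⟩
    have hall : ∀ b, s b = n := by
      by_contra hc
      push_neg at hc
      obtain ⟨b0, hb0⟩ := hc
      have hlt : s b0 < n := lt_of_le_of_ne (hinv.1 b0) hb0
      have hstrict : ∑ b, s b < ∑ _b : Fin n, n :=
        Finset.sum_lt_sum (fun b _ => hinv.1 b) ⟨b0, Finset.mem_univ b0, hlt⟩
      simp only [Finset.sum_const, Finset.card_univ, Fintype.card_fin, smul_eq_mul] at hstrict
      omega
    have hne : ∀ g, (suit I s g).Nonempty := by
      intro g
      have hn : 0 < n := g.pos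
      refine ⟨⟨0, hn⟩, (mem_suit I).mpr ?_⟩
      rw [hall]
      exact (I.rB ⟨0, hn⟩ g).isLt
    exact all_engaged_of_nonempty I hinv hne
  | succ k ih =>
    intro s hinv hsum
    by_cases h : ∀ b, Engaged I s b
    · exact ⟨s, hinv, h⟩
    · push_neg at h
      obtain ⟨b, hb⟩ := h
      have hsum' : ∑ b', Function.update s b (s b + 1) b' = (∑ b', s b') + 1 := by
        rw [Finset.sum_update_of_mem (Finset.mem_univ b), Finset.sdiff_singleton_eq_erase,
          ← Finset.add_sum_erase Finset.univ s (Finset.mem_univ b)]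
        omega
      exact ih _ (step I hinv hb) (by omega)

end StableAux

/-- For any instance of the stable matching problem with strict preferences,
a stable matching exists. -/
theorem stable_matching_exists {n : ℕ} (I : SMInst n) :
    ∃ μ : Equiv.Perm (Fin n), I.Stable μ := by
  classical
  have h0 : StableAux.Inv I (fun _ => 0) := by
    constructor
    · intro b; exact Nat.zero_le n
    · intro b g hf
      have := (StableAux.mem_suit I).mp hf.1
      omega
  obtain ⟨s, hinv, heng⟩ := StableAux.run I (n * n) (fun _ => 0) h0 (by simp)
  choose f hf using heng
  have hinj : Function.Injective f := by
    intro b1 b2 he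
    exact StableAux.fia_unique I (hf b1) (he ▸ hf b2)
  have hbij : Function.Bijective f := Finite.injective_iff_bijective.mp hinj
  refine ⟨Equiv.ofBijective f hbij, ?_⟩
  intro b g hblock
  obtain ⟨h1, h2⟩ := hblock
  have hb : StableAux.IsFia I s (f b) b := hf b
  have hμb : (Equiv.ofBijective f hbij) b = f b := rfl
  have hrank := hinv.2 b (f b) hb
  rw [hμb] at h1
  have hlt : (I.rB b g : ℕ) < s b := by
    rw [Fin.lt_def] at h1
    omega
  have hsuit : b ∈ StableAux.suit I s g := (StableAux.mem_suit I).mpr hlt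
  have hsymm : StableAux.IsFia I s g ((Equiv.ofBijective f hbij).symm g) := by
    have hg : f ((Equiv.ofBijective f hbij).symm g) = g :=
      (Equiv.ofBijective f hbij).apply_symm_apply g
    have h := hf ((Equiv.ofBijective f hbij).symm g)
    rwa [hg] at h
  exact absurd h2 (not_lt.mpr (hsymm.2 b hsuit))
end

section
/- If μ1 and μ2 are stable matchings such that every boy weakly prefers his partner in μ1 to his partner in μ2, then every girl weakly prefers her partner in μ2 to her partner in μ1. -/
/-- If every boy weakly prefers his partner in one stable matching over his
partner in a second, then every girl weakly prefers her partner in the second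
over her partner in the first. -/
theorem girls_prefer_inverse {n : ℕ} (I : SMInst n)
    (μ1 μ2 : Equiv.Perm (Fin n)) (h1 : I.Stable μ1) (h2 : I.Stable μ2)
    (h : ∀ b, I.rB b (μ1 b) ≤ I.rB b (μ2 b)) :
    ∀ g, I.rG g (μ2.symm g) ≤ I.rG g (μ1.symm g) := by
  intro g
  set b := μ1.symm g with hb
  by_cases heq : μ2 b = g
  · have : μ2.symm g = b := by rw [← heq]; simp
    rw [this]
  · have hbg : μ1 b = g := by simp [hb]
    have hne : μ1 b ≠ μ2 b := by rw [hbg]; exact fun hc => heq hc.symm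
    have hlt : I.rB b (μ1 b) < I.rB b (μ2 b) :=
      lt_of_le_of_ne (h b) (fun hc => hne (I.hB b hc))
    have hnb := h2 b g
    rw [SMInst.Blocking] at hnb
    push_neg at hnb
    exact hnb (hbg ▸ hlt)
end

section
/- For any two stable matchings μ1 and μ2, the function assigning to each boy his more preferred partner among μ1(b) and μ2(b) is itself a well-defined matching (a bijection) and is stable. -/
/-- The join of two stable matchings: assigning each boy his more preferred
partner among his two partners is a well-defined matching (a bijection) and
is stable. -/
theorem join_is_stable_matching {n : ℕ} (I : SMInst n)
    (μ1 μ2 : Equiv.Perm (Fin n)) (h1 : I.Stable μ1) (h2 : I.Stable μ2) :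
    ∃ μ : Equiv.Perm (Fin n),
      (∀ b, μ b = if I.rB b (μ1 b) ≤ I.rB b (μ2 b) then μ1 b else μ2 b) ∧
      I.Stable μ := by
  classical
  set f : Fin n → Fin n := fun b => if I.rB b (μ1 b) ≤ I.rB b (μ2 b) then μ1 b else μ2 b with hf
  have key : ∀ a b : Fin n, a ≠ b → μ1 a = μ2 b →
      I.rB a (μ1 a) ≤ I.rB a (μ2 a) → I.rB b (μ2 b) ≤ I.rB b (μ1 b) → False := by
    intro a b hne hg ha hb
    set g := μ1 a with hga
    have hgb : μ2 b = g := hg.symm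
    have h2a : μ2 a ≠ g := fun h => hne (μ2.injective (h.trans hgb.symm))
    have h1b : μ1 b ≠ g := fun h => hne (μ1.injective (hga ▸ h)).symm
    have hlt1 : I.rB a g < I.rB a (μ2 a) :=
      lt_of_le_of_ne ha (fun h => h2a (I.hB a h.symm))
    have hlt2 : I.rB b g < I.rB b (μ1 b) :=
      lt_of_le_of_ne (hgb ▸ hb) (fun h => h1b (I.hB b h.symm))
    rcases lt_or_gt_of_ne (fun h : I.rG g a = I.rG g b => hne (I.hG g h)) with hG1 | hG2
    · have hs : μ2.symm g = b := by rw [← hgb]; exact μ2.symm_apply_apply b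
      exact h2 a g ⟨hlt1, by rw [hs]; exact hG1⟩
    · have hs : μ1.symm g = a := μ1.symm_apply_apply a
      exact h1 b g ⟨hlt2, by rw [hs]; exact hG2⟩
  have hinj : Function.Injective f := by
    intro a b hab
    by_contra hne
    by_cases ca : I.rB a (μ1 a) ≤ I.rB a (μ2 a) <;>
      by_cases cb : I.rB b (μ1 b) ≤ I.rB b (μ2 b) <;>
        simp only [hf, ca, cb, if_pos, if_neg, if_true, if_false] at hab
    · exact hne (μ1.injective hab)
    · exact key a b hne hab ca (le_of_lt (lt_of_not_ge cb))
    · exact key b a (Ne.symm hne) hab.symm cb (le_of_lt (lt_of_not_ge ca))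
    · exact hne (μ2.injective hab)
  have hbij : Function.Bijective f := Finite.injective_iff_bijective.mp hinj
  refine ⟨Equiv.ofBijective f hbij, fun b => rfl, ?_⟩
  intro b g ⟨hbg, hgb⟩
  set μ := Equiv.ofBijective f hbij with hμ
  have hle1 : I.rB b (μ b) ≤ I.rB b (μ1 b) := by
    show I.rB b (f b) ≤ _
    by_cases c : I.rB b (μ1 b) ≤ I.rB b (μ2 b) <;> simp only [hf, c, if_true, if_false, le_refl]
    exact le_of_lt (lt_of_not_ge c)
  have hle2 : I.rB b (μ b) ≤ I.rB b (μ2 b) := by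
    show I.rB b (f b) ≤ _
    by_cases c : I.rB b (μ1 b) ≤ I.rB b (μ2 b) <;> simp only [hf, c, if_true, if_false, le_refl]
  set b0 := μ.symm g with hb0
  have hμb0 : f b0 = g := μ.apply_symm_apply g
  by_cases c : I.rB b0 (μ1 b0) ≤ I.rB b0 (μ2 b0)
  · have hg1 : μ1 b0 = g := by simpa [hf, c] using hμb0
    have hs1 : μ1.symm g = b0 := by rw [← hg1]; exact μ1.symm_apply_apply b0
    exact h1 b g ⟨lt_of_lt_of_le hbg hle1, by rw [hs1]; exact hgb⟩
  · have hg2 : μ2 b0 = g := by simpa [hf, c] using hμb0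
    have hs2 : μ2.symm g = b0 := by rw [← hg2]; exact μ2.symm_apply_apply b0
    exact h2 b g ⟨lt_of_lt_of_le hbg hle2, by rw [hs2]; exact hgb⟩
end

section
/- Similarly, the function assigning to each boy his less preferred partner among μ1(b) and μ2(b) is a well-defined stable matching. -/
/-- The meet of two stable matchings: assigning each boy his less preferred
partner among his two partners is a well-defined matching (a bijection) and
is stable. -/
theorem meet_is_stable_matching {n : ℕ} (I : SMInst n)
    (μ1 μ2 : Equiv.Perm (Fin n)) (h1 : I.Stable μ1) (h2 : I.Stable μ2) :
    ∃ μ : Equiv.Perm (Fin n),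
      (∀ b, μ b = if I.rB b (μ1 b) ≤ I.rB b (μ2 b) then μ2 b else μ1 b) ∧
      I.Stable μ := by
  classical
  set m : Fin n → Fin n :=
    fun b => if I.rB b (μ1 b) ≤ I.rB b (μ2 b) then μ2 b else μ1 b with hm
  set s : Fin n → Fin n :=
    fun b => if I.rB b (μ1 b) ≤ I.rB b (μ2 b) then μ1 b else μ2 b with hs
  have core : ∀ (ν1 ν2 : Equiv.Perm (Fin n)), I.Stable ν1 → I.Stable ν2 →
      ∀ a b g, a ≠ b → ν1 a = g → ν2 b = g →
      I.rB a g < I.rB a (ν2 a) → I.rB b g < I.rB b (ν1 b) → False := by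
    intro ν1 ν2 s1 s2 a b g hab h1g h2g ha hb
    rcases lt_trichotomy (I.rG g a) (I.rG g b) with h | h | h
    · refine s2 a g ⟨ha, ?_⟩
      rwa [show ν2.symm g = b from by rw [Equiv.symm_apply_eq]; exact h2g.symm]
    · exact hab (I.hG g h)
    · refine s1 b g ⟨hb, ?_⟩
      rwa [show ν1.symm g = a from by rw [Equiv.symm_apply_eq]; exact h1g.symm]
  have sinj : Function.Injective s := by
    intro a b hab
    by_contra hne
    simp only [hs] at hab
    by_cases c1 : I.rB a (μ1 a) ≤ I.rB a (μ2 a) <;>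
      by_cases c2 : I.rB b (μ1 b) ≤ I.rB b (μ2 b)
    · rw [if_pos c1, if_pos c2] at hab
      exact hne (μ1.injective hab)
    · rw [if_pos c1, if_neg c2] at hab
      have hne12 : μ1 a ≠ μ2 a := fun h => hne (μ2.injective (h.symm.trans hab))
      have ha : I.rB a (μ1 a) < I.rB a (μ2 a) :=
        lt_of_le_of_ne c1 (fun h => hne12 (I.hB a h))
      have hb : I.rB b (μ2 b) < I.rB b (μ1 b) := lt_of_not_ge c2
      exact core μ1 μ2 h1 h2 a b (μ1 a) hne rfl hab.symm ha (by rw [hab]; exact hb)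
    · rw [if_neg c1, if_pos c2] at hab
      have hne12 : μ1 b ≠ μ2 b := fun h => hne (μ2.injective (hab.trans h))
      have hb : I.rB b (μ1 b) < I.rB b (μ2 b) :=
        lt_of_le_of_ne c2 (fun h => hne12 (I.hB b h))
      have ha : I.rB a (μ2 a) < I.rB a (μ1 a) := lt_of_not_ge c1
      exact core μ2 μ1 h2 h1 a b (μ2 a) hne rfl hab.symm ha (by rw [hab]; exact hb)
    · rw [if_neg c1, if_neg c2] at hab
      exact hne (μ2.injective hab)
  have ssurj : Function.Surjective s := Finite.injective_iff_surjective.mp sinj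
  have minj : Function.Injective m := by
    intro a b hab
    by_contra hne
    simp only [hm] at hab
    by_cases c1 : I.rB a (μ1 a) ≤ I.rB a (μ2 a) <;>
      by_cases c2 : I.rB b (μ1 b) ≤ I.rB b (μ2 b)
    · rw [if_pos c1, if_pos c2] at hab
      exact hne (μ2.injective hab)
    · rw [if_pos c1, if_neg c2] at hab
      -- hab : μ2 a = μ1 b
      obtain ⟨b0, hb0⟩ := ssurj (μ1 b)
      simp only [hs] at hb0
      by_cases c0 : I.rB b0 (μ1 b0) ≤ I.rB b0 (μ2 b0)
      · rw [if_pos c0] at hb0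
        have hbb : b0 = b := μ1.injective hb0
        subst hbb
        exact c2 c0
      · rw [if_neg c0] at hb0
        have hbb : b0 = a := μ2.injective (hb0.trans hab.symm)
        subst hbb
        exact c0 c1
    · rw [if_neg c1, if_pos c2] at hab
      -- hab : μ1 a = μ2 b
      obtain ⟨b0, hb0⟩ := ssurj (μ1 a)
      simp only [hs] at hb0
      by_cases c0 : I.rB b0 (μ1 b0) ≤ I.rB b0 (μ2 b0)
      · rw [if_pos c0] at hb0
        have hbb : b0 = a := μ1.injective hb0
        subst hbb
        exact c1 c0
      · rw [if_neg c0] at hb0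
        have hbb : b0 = b := μ2.injective (hb0.trans hab)
        subst hbb
        exact c0 c2
    · rw [if_neg c1, if_neg c2] at hab
      exact hne (μ1.injective hab)
  have mbij : Function.Bijective m := ⟨minj, Finite.injective_iff_surjective.mp minj⟩
  let μ : Equiv.Perm (Fin n) := Equiv.ofBijective m mbij
  have hμ : ∀ b, μ b = m b := fun b => rfl
  have girlC : ∀ g, I.rG g (μ.symm g) ≤ I.rG g (μ1.symm g) ∧
      I.rG g (μ.symm g) ≤ I.rG g (μ2.symm g) := by
    intro g
    set b' := μ.symm g with hb'
    have hmb' : m b' = g := μ.apply_symm_apply g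
    by_cases c : I.rB b' (μ1 b') ≤ I.rB b' (μ2 b')
    · have h2g : μ2 b' = g := by rw [← hmb']; simp only [hm]; rw [if_pos c]
      have hsymm2 : μ2.symm g = b' := by rw [Equiv.symm_apply_eq]; exact h2g.symm
      constructor
      · set b1 := μ1.symm g with hb1
        have h1g : μ1 b1 = g := μ1.apply_symm_apply g
        by_cases hbb : b1 = b'
        · rw [hbb]
        · have hmb1 : m b1 ≠ g := fun h => hbb (minj (h.trans hmb'.symm))
          have hc1 : I.rB b1 (μ1 b1) ≤ I.rB b1 (μ2 b1) := by
            by_contra hc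
            apply hmb1
            simp only [hm]
            rw [if_neg hc]
            exact h1g
          have hmb1' : m b1 = μ2 b1 := by simp only [hm]; rw [if_pos hc1]
          have hne2 : μ2 b1 ≠ g := fun h => hmb1 (hmb1'.trans h)
          have hlt : I.rB b1 g < I.rB b1 (μ2 b1) := by
            rw [← h1g]
            exact lt_of_le_of_ne hc1 (fun h => hne2 (by rw [← I.hB b1 h, h1g]))
          by_contra hcon
          push_neg at hcon
          exact h2 b1 g ⟨hlt, by rw [hsymm2]; exact hcon⟩
      · rw [hsymm2]
    · have h1g : μ1 b' = g := by rw [← hmb']; simp only [hm]; rw [if_neg c]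
      have hsymm1 : μ1.symm g = b' := by rw [Equiv.symm_apply_eq]; exact h1g.symm
      constructor
      · rw [hsymm1]
      · set b2 := μ2.symm g with hb2
        have h2g : μ2 b2 = g := μ2.apply_symm_apply g
        by_cases hbb : b2 = b'
        · rw [hbb]
        · have hmb2 : m b2 ≠ g := fun h => hbb (minj (h.trans hmb'.symm))
          have hc2 : ¬ I.rB b2 (μ1 b2) ≤ I.rB b2 (μ2 b2) := by
            intro hc
            apply hmb2
            simp only [hm]
            rw [if_pos hc]
            exact h2g
          have hlt : I.rB b2 g < I.rB b2 (μ1 b2) := by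
            rw [← h2g]
            exact lt_of_not_ge hc2
          by_contra hcon
          push_neg at hcon
          exact h1 b2 g ⟨hlt, by rw [hsymm1]; exact hcon⟩
  refine ⟨μ, fun b => rfl, ?_⟩
  intro b g hblock
  obtain ⟨hBlt, hGlt⟩ := hblock
  rw [hμ b] at hBlt
  by_cases c : I.rB b (μ1 b) ≤ I.rB b (μ2 b)
  · have hmb : m b = μ2 b := by simp only [hm]; rw [if_pos c]
    rw [hmb] at hBlt
    exact h2 b g ⟨hBlt, lt_of_lt_of_le hGlt (girlC g).2⟩
  · have hmb : m b = μ1 b := by simp only [hm]; rw [if_neg c]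
    rw [hmb] at hBlt
    exact h1 b g ⟨hBlt, lt_of_lt_of_le hGlt (girlC g).1⟩
end

section
/- The set of stable matchings, ordered by μ1 ≥ μ2 iff every boy weakly prefers his μ1-partner to his μ2-partner, forms a distributive lattice. -/
namespace SMInst
variable {n : ℕ} (I : SMInst n)

lemma rB_lt_of_ne {b g g' : Fin n} (h : I.rB b g ≤ I.rB b g') (hne : g ≠ g') :
    I.rB b g < I.rB b g' := h.lt_of_ne fun e => hne (I.hB b e)

lemma lemA {μ ν : Equiv.Perm (Fin n)} (hν : I.Stable ν) (b : Fin n)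
    (h : I.rB b (μ b) < I.rB b (ν b)) :
    I.rG (μ b) (ν.symm (μ b)) < I.rG (μ b) b := by
  have hnb := hν b (μ b)
  rw [Blocking, not_and, not_lt] at hnb
  have h1 := hnb h
  refine h1.lt_of_ne fun e => ?_
  have h2 : ν.symm (μ b) = b := I.hG (μ b) e
  have h3 : μ b = ν b := by rw [← ν.apply_symm_apply (μ b), h2]
  exact h.ne (congrArg (I.rB b) h3)

def mFun (μ ν : Equiv.Perm (Fin n)) (b : Fin n) : Fin n :=
  if I.rB b (μ b) ≤ I.rB b (ν b) then μ b else ν b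

def jFun (μ ν : Equiv.Perm (Fin n)) (b : Fin n) : Fin n :=
  if I.rB b (μ b) ≤ I.rB b (ν b) then ν b else μ b

lemma rB_mFun (μ ν : Equiv.Perm (Fin n)) (b : Fin n) :
    I.rB b (I.mFun μ ν b) = min (I.rB b (μ b)) (I.rB b (ν b)) := by
  unfold mFun; split_ifs with h
  · exact (min_eq_left h).symm
  · exact (min_eq_right (le_of_lt (not_le.1 h))).symm

lemma rB_jFun (μ ν : Equiv.Perm (Fin n)) (b : Fin n) :
    I.rB b (I.jFun μ ν b) = max (I.rB b (μ b)) (I.rB b (ν b)) := by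
  unfold jFun; split_ifs with h
  · exact (max_eq_right h).symm
  · exact (max_eq_left (le_of_lt (not_le.1 h))).symm

lemma mFun_inj {μ ν : Equiv.Perm (Fin n)} (hμ : I.Stable μ) (hν : I.Stable ν) :
    Function.Injective (I.mFun μ ν) := by
  intro b b' he
  by_contra hne
  unfold mFun at he
  split_ifs at he with h1 h2 h2
  · exact hne (μ.injective he)
  · -- he : μ b = ν b'
    have hbb : μ b ≠ ν b := fun e => hne (ν.injective (e.symm.trans he))
    have h1' : I.rB b (μ b) < I.rB b (ν b) := I.rB_lt_of_ne h1 hbb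
    have h2' : I.rB b' (ν b') < I.rB b' (μ b') := not_le.1 h2
    have A := I.lemA hν b h1'
    have B := I.lemA (μ := ν) (ν := μ) hμ b' h2'
    rw [he, Equiv.symm_apply_apply] at A
    rw [← he, Equiv.symm_apply_apply, he] at B
    exact absurd B A.asymm
  · -- he : ν b = μ b'
    have hbb : μ b' ≠ ν b' := fun e => hne (ν.injective ((he.trans e).symm ▸ rfl : ν b = ν b'))
    have h2' : I.rB b' (μ b') < I.rB b' (ν b') := I.rB_lt_of_ne h2 hbb
    have h1' : I.rB b (ν b) < I.rB b (μ b) := not_le.1 h1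
    have A := I.lemA hν b' h2'
    have B := I.lemA (μ := ν) (ν := μ) hμ b h1'
    rw [← he, Equiv.symm_apply_apply, he] at A
    rw [he, Equiv.symm_apply_apply] at B
    exact absurd B A.asymm
  · exact hne (ν.injective he)

lemma jFun_inj {μ ν : Equiv.Perm (Fin n)} (hμ : I.Stable μ) (hν : I.Stable ν) :
    Function.Injective (I.jFun μ ν) := by
  intro b b' he
  by_contra hne
  have hsurj : Function.Surjective (I.mFun μ ν) :=
    Finite.injective_iff_surjective.1 (I.mFun_inj hμ hν)
  unfold jFun at he
  split_ifs at he with h1 h2 h2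
  · exact hne (ν.injective he)
  · -- he : ν b = μ b'
    obtain ⟨x, hx⟩ := hsurj (ν b)
    unfold mFun at hx
    split_ifs at hx with h3
    · have hxb : x = b' := μ.injective (hx.trans he)
      subst hxb; exact h2 h3
    · have hxb : x = b := ν.injective hx
      subst hxb; exact h3 h1
  · -- he : μ b = ν b'
    obtain ⟨x, hx⟩ := hsurj (μ b)
    unfold mFun at hx
    split_ifs at hx with h3
    · have hxb : x = b := μ.injective hx
      subst hxb; exact h1 h3
    · have hxb : x = b' := ν.injective (hx.trans he)
      subst hxb; exact h3 h2
  · exact hne (μ.injective he)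

lemma jFun_girl {μ ν : Equiv.Perm (Fin n)} (hμ : I.Stable μ) (hν : I.Stable ν) {x g : Fin n}
    (hx : I.jFun μ ν x = g) :
    I.rG g x ≤ I.rG g (μ.symm g) ∧ I.rG g x ≤ I.rG g (ν.symm g) := by
  have hx' := hx
  unfold jFun at hx'
  split_ifs at hx' with h1
  · -- ν x = g
    have hxg : x = ν.symm g := by rw [← hx', Equiv.symm_apply_apply]
    refine ⟨?_, le_of_eq (by rw [← hxg])⟩
    set a := μ.symm g with ha
    by_cases hax : a = x
    · rw [hax]
    · have hag : μ a = g := μ.apply_symm_apply g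
      by_cases h3 : I.rB a (μ a) ≤ I.rB a (ν a)
      · have hstrict : I.rB a (μ a) < I.rB a (ν a) := by
          refine I.rB_lt_of_ne h3 fun e => hax ?_
          have h4 : ν a = g := by rw [← e]; exact hag
          rw [hxg, ← h4, Equiv.symm_apply_apply]
        have A := I.lemA hν a hstrict
        rw [hag] at A
        rw [← hxg] at A
        exact A.le
      · have hja : I.jFun μ ν a = g := by unfold jFun; rw [if_neg h3, hag]
        exact absurd (I.jFun_inj hμ hν (hja.trans hx.symm)) hax
  · -- μ x = g
    have hxg : x = μ.symm g := by rw [← hx', Equiv.symm_apply_apply]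
    refine ⟨le_of_eq (by rw [← hxg]), ?_⟩
    set c := ν.symm g with hc
    by_cases hcx : c = x
    · rw [hcx]
    · have hcg : ν c = g := ν.apply_symm_apply g
      by_cases h3 : I.rB c (μ c) ≤ I.rB c (ν c)
      · have hjc : I.jFun μ ν c = g := by unfold jFun; rw [if_pos h3, hcg]
        exact absurd (I.jFun_inj hμ hν (hjc.trans hx.symm)) hcx
      · have hstrict : I.rB c (ν c) < I.rB c (μ c) := not_le.1 h3
        have A := I.lemA (μ := ν) (ν := μ) hμ c hstrict
        rw [hcg] at A
        rw [← hxg] at A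
        exact A.le

noncomputable def mPerm {μ ν : Equiv.Perm (Fin n)} (hμ : I.Stable μ) (hν : I.Stable ν) :
    Equiv.Perm (Fin n) :=
  Equiv.ofBijective _ (Finite.injective_iff_bijective.1 (I.mFun_inj hμ hν))

noncomputable def jPerm {μ ν : Equiv.Perm (Fin n)} (hμ : I.Stable μ) (hν : I.Stable ν) :
    Equiv.Perm (Fin n) :=
  Equiv.ofBijective _ (Finite.injective_iff_bijective.1 (I.jFun_inj hμ hν))

lemma mPerm_apply {μ ν : Equiv.Perm (Fin n)} (hμ : I.Stable μ) (hν : I.Stable ν) (b : Fin n) :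
    I.mPerm hμ hν b = I.mFun μ ν b := rfl

lemma jPerm_apply {μ ν : Equiv.Perm (Fin n)} (hμ : I.Stable μ) (hν : I.Stable ν) (b : Fin n) :
    I.jPerm hμ hν b = I.jFun μ ν b := rfl

lemma rB_mPerm {μ ν : Equiv.Perm (Fin n)} (hμ : I.Stable μ) (hν : I.Stable ν) (b : Fin n) :
    I.rB b (I.mPerm hμ hν b) = min (I.rB b (μ b)) (I.rB b (ν b)) := I.rB_mFun μ ν b

lemma rB_jPerm {μ ν : Equiv.Perm (Fin n)} (hμ : I.Stable μ) (hν : I.Stable ν) (b : Fin n) :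
    I.rB b (I.jPerm hμ hν b) = max (I.rB b (μ b)) (I.rB b (ν b)) := I.rB_jFun μ ν b

lemma jPerm_stable {μ ν : Equiv.Perm (Fin n)} (hμ : I.Stable μ) (hν : I.Stable ν) :
    I.Stable (I.jPerm hμ hν) := by
  intro b g hblock
  obtain ⟨hb, hg⟩ := hblock
  have hsymm : I.jFun μ ν ((I.jPerm hμ hν).symm g) = g := (I.jPerm hμ hν).apply_symm_apply g
  have hC := I.jFun_girl hμ hν hsymm
  rw [I.jPerm_apply] at hb
  unfold jFun at hb
  split_ifs at hb with h1
  · exact hν b g ⟨hb, lt_of_lt_of_le hg hC.2⟩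
  · exact hμ b g ⟨hb, lt_of_lt_of_le hg hC.1⟩

lemma mPerm_stable {μ ν : Equiv.Perm (Fin n)} (hμ : I.Stable μ) (hν : I.Stable ν) :
    I.Stable (I.mPerm hμ hν) := by
  intro b g hblock
  obtain ⟨hb, hg⟩ := hblock
  have hx : I.mFun μ ν ((I.mPerm hμ hν).symm g) = g := (I.mPerm hμ hν).apply_symm_apply g
  rw [I.rB_mPerm] at hb
  unfold mFun at hx
  split_ifs at hx with h3
  · have hms : μ.symm g = (I.mPerm hμ hν).symm g :=
      μ.injective (by rw [μ.apply_symm_apply]; exact hx.symm)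
    exact hμ b g ⟨hb.trans_le (min_le_left _ _), by rw [hms]; exact hg⟩
  · have hms : ν.symm g = (I.mPerm hμ hν).symm g :=
      ν.injective (by rw [ν.apply_symm_apply]; exact hx.symm)
    exact hν b g ⟨hb.trans_le (min_le_right _ _), by rw [hms]; exact hg⟩

end SMInst

/-- The set of stable matchings, ordered by the boys' preferences
(here `μ1 ≤ μ2` iff every boy weakly prefers his `μ1`-partner to his
`μ2`-partner, i.e. `μ1 ≥ μ2` in the paper's notation), forms a distributive
lattice. -/
theorem stable_matchings_distrib_lattice {n : ℕ} (I : SMInst n) :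
    ∃ inst : DistribLattice {μ : Equiv.Perm (Fin n) // I.Stable μ},
      ∀ μ1 μ2 : {μ : Equiv.Perm (Fin n) // I.Stable μ},
        (inst.toLattice.toSemilatticeSup.toPartialOrder.toPreorder.toLE.le μ1 μ2 ↔
          ∀ b, I.rB b (μ1.1 b) ≤ I.rB b (μ2.1 b)) := by
  refine ⟨{
    le := fun μ1 μ2 => ∀ b, I.rB b (μ1.1 b) ≤ I.rB b (μ2.1 b)
    le_refl := fun μ1 b => le_refl _
    le_trans := fun a b c hab hbc x => (hab x).trans (hbc x)
    le_antisymm := fun a b hab hba =>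
      Subtype.ext (Equiv.ext fun x => I.hB x (le_antisymm (hab x) (hba x)))
    sup := fun a b => ⟨I.jPerm a.2 b.2, I.jPerm_stable a.2 b.2⟩
    inf := fun a b => ⟨I.mPerm a.2 b.2, I.mPerm_stable a.2 b.2⟩
    le_sup_left := fun a b x => by
      show I.rB x (a.1 x) ≤ I.rB x (I.jPerm a.2 b.2 x)
      rw [I.rB_jPerm]; exact le_max_left _ _
    le_sup_right := fun a b x => by
      show I.rB x (b.1 x) ≤ I.rB x (I.jPerm a.2 b.2 x)
      rw [I.rB_jPerm]; exact le_max_right _ _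
    sup_le := fun a b c hac hbc x => by
      show I.rB x (I.jPerm a.2 b.2 x) ≤ I.rB x (c.1 x)
      rw [I.rB_jPerm]; exact max_le (hac x) (hbc x)
    inf_le_left := fun a b x => by
      show I.rB x (I.mPerm a.2 b.2 x) ≤ I.rB x (a.1 x)
      rw [I.rB_mPerm]; exact min_le_left _ _
    inf_le_right := fun a b x => by
      show I.rB x (I.mPerm a.2 b.2 x) ≤ I.rB x (b.1 x)
      rw [I.rB_mPerm]; exact min_le_right _ _
    le_inf := fun a b c hab hac x => by
      show I.rB x (a.1 x) ≤ I.rB x (I.mPerm b.2 c.2 x)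
      rw [I.rB_mPerm]; exact le_min (hab x) (hac x)
    le_sup_inf := fun a b c x => by
      show I.rB x (I.mPerm (I.jPerm_stable a.2 b.2) (I.jPerm_stable a.2 c.2) x) ≤
        I.rB x (I.jPerm a.2 (I.mPerm_stable b.2 c.2) x)
      rw [I.rB_mPerm, I.rB_jPerm, I.rB_jPerm, I.rB_jPerm, I.rB_mPerm]
      exact (max_min_distrib_left _ _ _).ge
  }, fun μ1 μ2 => Iff.rfl⟩
end

section
/- There exists a stable matching (the boy-optimal one) in which every boy is matched to his best stable partner, and a stable matching (the boy-pessimal one) in which every boy is matched to his worst stable partner. -/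
namespace GSProof
variable {n : ℕ}

/-- Measure of a Gale–Shapley state. -/
def GSM (e : Fin n → Option (Fin n)) (next : Fin n → ℕ) : ℕ :=
  (∑ b, next b) + (Finset.univ.filter (fun g => (e g).isSome)).card

/-- Invariant of the Gale–Shapley algorithm.  `e g = some b` means girl `g` is
currently engaged to boy `b`; `next b` is the rank of the girl boy `b` is
currently proposing to (equivalently the number of girls who rejected him). -/
structure GSInv (I : SMInst n) (e : Fin n → Option (Fin n)) (next : Fin n → ℕ) : Prop where
  rank : ∀ g b, e g = some b → (I.rB b g : ℕ) = next b
  inj : ∀ g g' b, e g = some b → e g' = some b → g = g'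
  better : ∀ b g, (I.rB b g : ℕ) < next b → ∃ b', e g = some b' ∧ I.rG g b' < I.rG g b
  opt : ∀ μ, I.Stable μ → ∀ b, next b ≤ (I.rB b (μ b) : ℕ)
  bound : ∀ b, next b ≤ n

lemma gs_bound {I : SMInst n} {e next} (h : GSInv I e next) : GSM e next ≤ n * n + n := by
  unfold GSM
  have h1 : (∑ b, next b) ≤ n * n := by
    calc (∑ b, next b) ≤ ∑ _b : Fin n, n := Finset.sum_le_sum fun b _ => h.bound b
    _ = n * n := by simp [Finset.sum_const, mul_comm]
  have h2 : (Finset.univ.filter (fun g => (e g).isSome)).card ≤ n := by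
    calc _ ≤ (Finset.univ : Finset (Fin n)).card := Finset.card_filter_le _ _
    _ = n := by simp
  omega

lemma gs_next_lt {I : SMInst n} {e next} (h : GSInv I e next) (b : Fin n)
    (hb : ∀ g, e g ≠ some b) : next b < n := by
  by_contra hn
  push_neg at hn
  have hall : ∀ g, ∃ b', e g = some b' := by
    intro g
    obtain ⟨b', hb', _⟩ := h.better b g (lt_of_lt_of_le (I.rB b g).isLt hn)
    exact ⟨b', hb'⟩
  choose t ht using hall
  have htinj : Function.Injective t := fun g g' hgg' =>
    h.inj g g' (t g) (ht g) (hgg' ▸ ht g')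
  obtain ⟨g, hg⟩ := (Finite.injective_iff_surjective.mp htinj) b
  exact hb g (hg ▸ ht g)

lemma gs_step (I : SMInst n) (e : Fin n → Option (Fin n)) (next : Fin n → ℕ)
    (h : GSInv I e next) (b : Fin n) (hb : ∀ g, e g ≠ some b) :
    ∃ e' next', GSInv I e' next' ∧ GSM e' next' = GSM e next + 1 := by
  have hlt : next b < n := gs_next_lt h b hb
  obtain ⟨g, hg⟩ : ∃ g, I.rB b g = ⟨next b, hlt⟩ :=
    (Finite.injective_iff_surjective.mp (I.hB b)) ⟨next b, hlt⟩
  have hgv : (I.rB b g : ℕ) = next b := by rw [hg]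
  rcases he : e g with _ | b'
  · -- girl g is free: engage (b, g)
    refine ⟨Function.update e g (some b), next, ⟨?_, ?_, ?_, h.opt, h.bound⟩, ?_⟩
    · intro g₂ b₂ h₂
      by_cases hgg : g₂ = g
      · subst hgg
        rw [Function.update_self] at h₂
        obtain rfl : b = b₂ := by injection h₂
        exact hgv
      · rw [Function.update_of_ne hgg] at h₂; exact h.rank g₂ b₂ h₂
    · intro g₂ g₃ b₂ h₂ h₃
      by_cases hg2 : g₂ = g <;> by_cases hg3 : g₃ = g
      · rw [hg2, hg3]
      · subst hg2
        rw [Function.update_self] at h₂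
        obtain rfl : b = b₂ := by injection h₂
        rw [Function.update_of_ne hg3] at h₃
        exact absurd h₃ (hb g₃)
      · subst hg3
        rw [Function.update_self] at h₃
        obtain rfl : b = b₂ := by injection h₃
        rw [Function.update_of_ne hg2] at h₂
        exact absurd h₂ (hb g₂)
      · rw [Function.update_of_ne hg2] at h₂
        rw [Function.update_of_ne hg3] at h₃
        exact h.inj g₂ g₃ b₂ h₂ h₃
    · intro b₂ g₂ hlt₂
      obtain ⟨b₃, hb₃, hr⟩ := h.better b₂ g₂ hlt₂
      have hgg : g₂ ≠ g := by rintro rfl; rw [he] at hb₃; cases hb₃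
      exact ⟨b₃, by rw [Function.update_of_ne hgg]; exact hb₃, hr⟩
    · unfold GSM
      have hcard : Finset.univ.filter (fun x => (Function.update e g (some b) x).isSome)
          = insert g (Finset.univ.filter (fun x => (e x).isSome)) := by
        ext x
        by_cases hx : x = g
        · subst hx; simp [he]
        · simp [Function.update_of_ne hx, hx]
      rw [hcard, Finset.card_insert_of_notMem (by simp [he])]
      omega
  · -- girl g is engaged to b'
    have hbb' : b' ≠ b := fun hh => hb g (hh ▸ he)
    have hrne : I.rG g b ≠ I.rG g b' := fun hh => hbb' (I.hG g hh).symm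
    have hrankb' : (I.rB b' g : ℕ) = next b' := h.rank g b' he
    rcases lt_or_gt_of_ne hrne with hcase | hcase
    · -- g dumps b' for b
      have key : ∀ μ, I.Stable μ → μ b' ≠ g := by
        intro μ hμ hμb'
        apply hμ b g
        constructor
        · have h2 : next b ≤ (I.rB b (μ b) : ℕ) := h.opt μ hμ b
          have h3 : μ b ≠ g := by
            rintro rfl; exact hbb' (μ.injective hμb')
          have h4 : (I.rB b g : ℕ) ≠ (I.rB b (μ b) : ℕ) := by
            intro hh
            exact h3 (I.hB b (Fin.val_injective hh)).symm
          rw [Fin.lt_def]; omega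
        · have : μ.symm g = b' := by rw [← hμb', Equiv.symm_apply_apply]
          rw [this]; exact hcase
      have hnextb' : next b' < n := hrankb' ▸ (I.rB b' g).isLt
      refine ⟨Function.update e g (some b), Function.update next b' (next b' + 1),
        ⟨?_, ?_, ?_, ?_, ?_⟩, ?_⟩
      · intro g₂ b₂ h₂
        by_cases hgg : g₂ = g
        · subst hgg
          rw [Function.update_self] at h₂
          obtain rfl : b = b₂ := by injection h₂
          rw [Function.update_of_ne (fun hh => hbb' hh.symm)]
          exact hgv
        · rw [Function.update_of_ne hgg] at h₂
          have hb₂ : b₂ ≠ b' := by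
            rintro rfl
            exact hgg (h.inj g₂ g b₂ h₂ he)
          rw [Function.update_of_ne hb₂]
          exact h.rank g₂ b₂ h₂
      · intro g₂ g₃ b₂ h₂ h₃
        by_cases hg2 : g₂ = g <;> by_cases hg3 : g₃ = g
        · rw [hg2, hg3]
        · subst hg2
          rw [Function.update_self] at h₂
          obtain rfl : b = b₂ := by injection h₂
          rw [Function.update_of_ne hg3] at h₃
          exact absurd h₃ (hb g₃)
        · subst hg3
          rw [Function.update_self] at h₃
          obtain rfl : b = b₂ := by injection h₃
          rw [Function.update_of_ne hg2] at h₂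
          exact absurd h₂ (hb g₂)
        · rw [Function.update_of_ne hg2] at h₂
          rw [Function.update_of_ne hg3] at h₃
          exact h.inj g₂ g₃ b₂ h₂ h₃
      · intro b₂ g₂ hlt₂
        by_cases hb2 : b₂ = b'
        · rw [hb2, Function.update_self] at hlt₂
          rw [hb2]
          rcases Nat.lt_succ_iff_lt_or_eq.mp hlt₂ with hlt₃ | heq
          · obtain ⟨b₃, hb₃, hr⟩ := h.better b' g₂ hlt₃
            by_cases hgg : g₂ = g
            · subst hgg
              rw [he] at hb₃
              obtain rfl : b' = b₃ := by injection hb₃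
              exact ⟨b, by rw [Function.update_self], lt_trans hcase hr⟩
            · exact ⟨b₃, by rw [Function.update_of_ne hgg]; exact hb₃, hr⟩
          · have hg2g : g₂ = g := by
              apply I.hB b'
              apply Fin.val_injective
              rw [heq, hrankb']
            subst hg2g
            exact ⟨b, by rw [Function.update_self], hcase⟩
        · rw [Function.update_of_ne hb2] at hlt₂
          obtain ⟨b₃, hb₃, hr⟩ := h.better b₂ g₂ hlt₂
          by_cases hgg : g₂ = g
          · subst hgg
            rw [he] at hb₃
            obtain rfl : b' = b₃ := by injection hb₃
            exact ⟨b, by rw [Function.update_self], lt_trans hcase hr⟩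
          · exact ⟨b₃, by rw [Function.update_of_ne hgg]; exact hb₃, hr⟩
      · intro μ hμ b₂
        by_cases hb2 : b₂ = b'
        · rw [hb2, Function.update_self]
          have h2 : next b' ≤ (I.rB b' (μ b') : ℕ) := h.opt μ hμ b'
          have h4 : (I.rB b' (μ b') : ℕ) ≠ next b' := by
            intro hh
            apply key μ hμ
            apply I.hB b'
            apply Fin.val_injective
            rw [hh, hrankb']
          omega
        · rw [Function.update_of_ne hb2]; exact h.opt μ hμ b₂
      · intro b₂
        by_cases hb2 : b₂ = b'
        · rw [hb2, Function.update_self]; omega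
        · rw [Function.update_of_ne hb2]; exact h.bound b₂
      · unfold GSM
        have hsum : (∑ x, Function.update next b' (next b' + 1) x) = (∑ x, next x) + 1 := by
          rw [Finset.sum_update_of_mem (Finset.mem_univ b'), Finset.sdiff_singleton_eq_erase]
          rw [← Finset.sum_erase_add Finset.univ next (Finset.mem_univ b')]
          omega
        have hcard : Finset.univ.filter (fun x => (Function.update e g (some b) x).isSome)
            = Finset.univ.filter (fun x => (e x).isSome) := by
          ext x
          by_cases hx : x = g
          · subst hx; simp [he]
          · simp [Function.update_of_ne hx]
        rw [hsum, hcard]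
        omega
    · -- g rejects b
      have key : ∀ μ, I.Stable μ → μ b ≠ g := by
        intro μ hμ hμb
        apply hμ b' g
        constructor
        · have h2 : next b' ≤ (I.rB b' (μ b') : ℕ) := h.opt μ hμ b'
          have h3 : μ b' ≠ g := by
            rintro rfl; exact hbb' (μ.injective hμb).symm
          have h4 : (I.rB b' g : ℕ) ≠ (I.rB b' (μ b') : ℕ) := by
            intro hh
            exact h3 (I.hB b' (Fin.val_injective hh)).symm
          rw [Fin.lt_def]; omega
        · have hsymm : μ.symm g = b := by rw [← hμb, Equiv.symm_apply_apply]
          rw [hsymm]; exact hcase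
      refine ⟨e, Function.update next b (next b + 1), ⟨?_, h.inj, ?_, ?_, ?_⟩, ?_⟩
      · intro g₂ b₂ h₂
        have hb₂ : b₂ ≠ b := fun hh => hb g₂ (hh ▸ h₂)
        rw [Function.update_of_ne hb₂]
        exact h.rank g₂ b₂ h₂
      · intro b₂ g₂ hlt₂
        by_cases hb2 : b₂ = b
        · rw [hb2, Function.update_self] at hlt₂
          rw [hb2]
          rcases Nat.lt_succ_iff_lt_or_eq.mp hlt₂ with hlt₃ | heq
          · exact h.better b g₂ hlt₃
          · have hg2g : g₂ = g := by
              apply I.hB b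
              apply Fin.val_injective
              rw [heq, hgv]
            subst hg2g
            exact ⟨b', he, hcase⟩
        · rw [Function.update_of_ne hb2] at hlt₂
          exact h.better b₂ g₂ hlt₂
      · intro μ hμ b₂
        by_cases hb2 : b₂ = b
        · rw [hb2, Function.update_self]
          have h2 : next b ≤ (I.rB b (μ b) : ℕ) := h.opt μ hμ b
          have h4 : (I.rB b (μ b) : ℕ) ≠ next b := by
            intro hh
            apply key μ hμ
            apply I.hB b
            apply Fin.val_injective
            rw [hh, hgv]
          omega
        · rw [Function.update_of_ne hb2]; exact h.opt μ hμ b₂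
      · intro b₂
        by_cases hb2 : b₂ = b
        · rw [hb2, Function.update_self]; omega
        · rw [Function.update_of_ne hb2]; exact h.bound b₂
      · unfold GSM
        have hsum : (∑ x, Function.update next b (next b + 1) x) = (∑ x, next x) + 1 := by
          rw [Finset.sum_update_of_mem (Finset.mem_univ b), Finset.sdiff_singleton_eq_erase]
          rw [← Finset.sum_erase_add Finset.univ next (Finset.mem_univ b)]
          omega
        rw [hsum]
        omega

lemma gs_done (I : SMInst n) (e : Fin n → Option (Fin n)) (next : Fin n → ℕ)
    (h : GSInv I e next) (hall : ∀ b, ∃ g, e g = some b) :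
    ∃ μ : Equiv.Perm (Fin n), I.Stable μ ∧
      ∀ μ', I.Stable μ' → ∀ b, I.rB b (μ b) ≤ I.rB b (μ' b) := by
  choose σ hσ using hall
  have hσinj : Function.Injective σ := by
    intro b b' hbb
    have h1 : e (σ b) = some b := hσ b
    have h2 : e (σ b) = some b' := hbb ▸ hσ b'
    rw [h1] at h2
    injection h2
  let μ : Equiv.Perm (Fin n) := Equiv.ofBijective σ (Finite.injective_iff_bijective.mp hσinj)
  have hμ : ∀ b, μ b = σ b := fun b => rfl
  have hμsymm : ∀ g, e g = some (μ.symm g) := by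
    intro g
    have hσg : σ (μ.symm g) = g := by
      have := μ.apply_symm_apply g
      rw [← hμ]; exact this
    have h2 := hσ (μ.symm g)
    rwa [hσg] at h2
  have hrank : ∀ b, (I.rB b (μ b) : ℕ) = next b := fun b => h.rank (σ b) b (hσ b)
  constructor
  · constructor
    · intro b g hbl
      obtain ⟨h1, h2⟩ := hbl
      have h1' : (I.rB b g : ℕ) < next b := by
        rw [← hrank b]; exact h1
      obtain ⟨b', hb', hr⟩ := h.better b g h1'
      rw [hμsymm g] at hb'
      obtain rfl : μ.symm g = b' := by injection hb'
      exact absurd h2 (asymm hr)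
    · intro μ' hμ' b
      rw [Fin.le_def, hrank b]
      exact h.opt μ' hμ' b

lemma gs_main (I : SMInst n) :
    ∃ μ : Equiv.Perm (Fin n), I.Stable μ ∧
      ∀ μ', I.Stable μ' → ∀ b, I.rB b (μ b) ≤ I.rB b (μ' b) := by
  suffices H : ∀ (k : ℕ) (e : Fin n → Option (Fin n)) (next : Fin n → ℕ),
      GSInv I e next → n * n + n ≤ GSM e next + k →
      ∃ μ : Equiv.Perm (Fin n), I.Stable μ ∧
        ∀ μ', I.Stable μ' → ∀ b, I.rB b (μ b) ≤ I.rB b (μ' b) by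
    refine H (n * n + n) (fun _ => none) (fun _ => 0) ⟨?_, ?_, ?_, ?_, ?_⟩ (Nat.le_add_left _ _)
    · intro g b hgb; cases hgb
    · intro g g' b hgb; cases hgb
    · intro b g hlt; exact absurd hlt (Nat.not_lt_zero _)
    · intro μ _ b; exact Nat.zero_le _
    · intro b; exact Nat.zero_le _
  intro k
  induction k with
  | zero =>
    intro e next h hM
    by_cases hfree : ∃ b, ∀ g, e g ≠ some b
    · obtain ⟨b, hb⟩ := hfree
      obtain ⟨e', next', h', hM'⟩ := gs_step I e next h b hb
      have := gs_bound h'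
      omega
    · push_neg at hfree
      exact gs_done I e next h hfree
  | succ k ih =>
    intro e next h hM
    by_cases hfree : ∃ b, ∀ g, e g ≠ some b
    · obtain ⟨b, hb⟩ := hfree
      obtain ⟨e', next', h', hM'⟩ := gs_step I e next h b hb
      exact ih e' next' h' (by omega)
    · push_neg at hfree
      exact gs_done I e next h hfree

/-- The instance with the roles of boys and girls swapped. -/
def swap (I : SMInst n) : SMInst n := ⟨I.rG, I.rB, I.hG, I.hB⟩

lemma stable_swap {I : SMInst n} {μ : Equiv.Perm (Fin n)} (h : I.Stable μ) :
    (swap I).Stable μ.symm := by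
  intro g b hbl
  obtain ⟨h1, h2⟩ := hbl
  rw [Equiv.symm_symm] at h2
  exact h b g ⟨h2, h1⟩

lemma stable_unswap {I : SMInst n} {ν : Equiv.Perm (Fin n)} (h : (swap I).Stable ν) :
    I.Stable ν.symm := by
  intro b g hbl
  obtain ⟨h1, h2⟩ := hbl
  rw [Equiv.symm_symm] at h2
  exact h g b ⟨h2, h1⟩

end GSProof


/-- There exists a stable matching (the boy-optimal one) in which every boy is
matched to his best stable partner, and a stable matching (the boy-pessimal one)
in which every boy is matched to his worst stable partner. -/
theorem boy_optimal_and_pessimal_exist {n : ℕ} (I : SMInst n) :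
    (∃ μ : Equiv.Perm (Fin n), I.Stable μ ∧
      ∀ μ', I.Stable μ' → ∀ b, I.rB b (μ b) ≤ I.rB b (μ' b)) ∧
    (∃ μ : Equiv.Perm (Fin n), I.Stable μ ∧
      ∀ μ', I.Stable μ' → ∀ b, I.rB b (μ' b) ≤ I.rB b (μ b)) := by
  constructor
  · exact GSProof.gs_main I
  · obtain ⟨ν, hνS, hνopt⟩ := GSProof.gs_main (GSProof.swap I)
    refine ⟨ν.symm, GSProof.stable_unswap hνS, ?_⟩
    · intro μ' hμ' b
      by_contra hlt
      push_neg at hlt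
      set g := ν.symm b with hgdef
      have hνg : ν g = b := ν.apply_symm_apply b
      have hμ'bg : μ' b ≠ g := by
        intro hh
        rw [hh] at hlt
        exact lt_irrefl _ hlt
      apply hμ' b g
      constructor
      · exact hlt
      · have hopt := hνopt μ'.symm (GSProof.stable_swap hμ') g
        have hνgb : (GSProof.swap I).rB g (ν g) = I.rG g b := by rw [hνg]; rfl
        have h1 : I.rG g b ≤ I.rG g (μ'.symm g) := by
          rw [← hνgb]; exact hopt
        have h2 : I.rG g b ≠ I.rG g (μ'.symm g) := by
          intro hh
          have := I.hG g hh
          apply hμ'bg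
          rw [this, Equiv.apply_symm_apply]
        exact lt_of_le_of_ne h1 h2
end

section
/- For every n there exists a stable matching instance with n boys and n girls having at least 2^{⌊n/2⌋} stable matchings. -/
section Aux
variable {n : ℕ}

/-- partner of `b`: the other member of its 2-block (itself if none). -/
def ptn (n : ℕ) (b : Fin n) : Fin n :=
  if b.val % 2 = 0 then (if h2 : b.val + 1 < n then ⟨b.val + 1, h2⟩ else b)
  else ⟨b.val - 1, by omega⟩

lemma ptn_val (b : Fin n) : (ptn n b).val =
    if b.val % 2 = 0 then (if b.val + 1 < n then b.val + 1 else b.val) else b.val - 1 := by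
  unfold ptn
  split_ifs <;> rfl

lemma ptn_invol (b : Fin n) : ptn n (ptn n b) = b := by
  have h1 := ptn_val b
  have h2 := ptn_val (ptn n b)
  have hb := b.isLt
  have h3 := (ptn n b).isLt
  apply Fin.ext
  split_ifs at h1 h2 <;> omega

lemma ptn_div2 (b : Fin n) : (ptn n b).val / 2 = b.val / 2 := by
  have h1 := ptn_val b
  have hb := b.isLt
  split_ifs at h1 <;> omega

/-- rank permutation: `pp x y x = 0` and (if `x ≠ y`) `pp x y y = 1`. -/
def pp [NeZero n] (x y : Fin n) : Equiv.Perm (Fin n) :=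
  if x = y then Equiv.swap 0 x
  else (Equiv.swap 0 x).trans (Equiv.swap 1 (Equiv.swap 0 x y))

lemma zero_ne_one_of_ne [NeZero n] {x y : Fin n} (h : x ≠ y) : (0 : Fin n) ≠ 1 := by
  have hx := x.isLt; have hy := y.isLt
  have : x.val ≠ y.val := fun hc => h (Fin.ext hc)
  have h2 : 2 ≤ n := by omega
  simp [Fin.ext_iff, Fin.val_one', Nat.mod_eq_of_lt h2]

lemma pp_x [NeZero n] (x y : Fin n) : pp x y x = 0 := by
  unfold pp
  split_ifs with h
  · simp
  · have hy : Equiv.swap 0 x y ≠ 0 := by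
      intro hc
      exact h ((Equiv.swap 0 x).injective (by simpa using hc)).symm
    simp [Equiv.swap_apply_of_ne_of_ne (zero_ne_one_of_ne h) (Ne.symm hy)]

lemma pp_y [NeZero n] {x y : Fin n} (h : x ≠ y) : pp x y y = 1 := by
  unfold pp
  simp [h]

lemma pp_eq_zero [NeZero n] {x y g : Fin n} (h : pp x y g = 0) : g = x :=
  (pp x y).injective (by rw [h, pp_x])

end Aux

section Main
variable {n : ℕ} [NeZero n]

/-- The block instance: boy `b` ranks girl `b` first then `ptn b`;
girl `g` ranks boy `ptn g` first then `g`. -/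
def blockInst (n : ℕ) [NeZero n] : SMInst n where
  rB b := pp b (ptn n b)
  rG g := pp (ptn n g) g
  hB b := (pp b (ptn n b)).injective
  hG g := (pp (ptn n g) g).injective

/-- swap function for a selection of blocks -/
def swf (s : Fin (n / 2) → Bool) (b : Fin n) : Fin n :=
  if h : b.val / 2 < n / 2 then (if s ⟨b.val / 2, h⟩ then ptn n b else b) else b

lemma swf_invol (s : Fin (n / 2) → Bool) : Function.Involutive (swf s) := by
  intro b
  unfold swf
  split_ifs with h hs h2 hs2 h3 hs3 <;>
    simp_all [ptn_div2, ptn_invol]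

lemma swf_cases (s : Fin (n / 2) → Bool) (b : Fin n) :
    swf s b = b ∨ swf s b = ptn n b := by
  unfold swf; split_ifs <;> simp

def mu (s : Fin (n / 2) → Bool) : Equiv.Perm (Fin n) := (swf_invol s).toPerm

lemma mu_apply (s : Fin (n / 2) → Bool) (b : Fin n) : mu s b = swf s b := rfl

lemma mu_symm_apply (s : Fin (n / 2) → Bool) (b : Fin n) : (mu s).symm b = swf s b := rfl

lemma two_le_of_ptn_ne {b : Fin n} (h : ptn n b ≠ b) : 2 ≤ n := by
  have h1 : (ptn n b).val ≠ b.val := fun hc => h (Fin.ext hc)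
  have := (ptn n b).isLt; have := b.isLt
  omega

@[simp] lemma blockInst_rB (b g : Fin n) : (blockInst n).rB b g = pp b (ptn n b) g := rfl
@[simp] lemma blockInst_rG (g b : Fin n) : (blockInst n).rG g b = pp (ptn n g) g b := rfl

lemma mu_stable (s : Fin (n / 2) → Bool) : (blockInst n).Stable (mu s) := by
  rintro b g ⟨h1, h2⟩
  rw [mu_symm_apply] at h2
  rw [mu_apply] at h1
  simp only [blockInst_rB, blockInst_rG] at h1 h2
  show False
  rcases swf_cases s b with hc | hc
  · rw [hc, pp_x] at h1
    exact absurd (h1.trans_le (Fin.zero_le _)) (lt_irrefl _)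
  · by_cases hptn : ptn n b = b
    · rw [hc, hptn, pp_x] at h1
      exact absurd (h1.trans_le (Fin.zero_le _)) (lt_irrefl _)
    · have h2n : 2 ≤ n := two_le_of_ptn_ne hptn
      rw [hc, pp_y (Ne.symm hptn)] at h1
      -- h1 : pp b (ptn n b) g < 1, so it is 0, so g = b
      have hval : (pp b (ptn n b) g).val < (1 : Fin n).val := h1
      have hone : (1 : Fin n).val = 1 := by
        rw [Fin.val_one']; exact Nat.mod_eq_of_lt h2n
      rw [hone] at hval
      have h0 : pp b (ptn n b) g = 0 := by
        apply Fin.ext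
        rw [Fin.val_zero]
        omega
      have hg : g = b := pp_eq_zero h0
      rw [hg, hc, pp_x] at h2
      exact absurd (h2.trans_le (Fin.zero_le _)) (lt_irrefl _)

lemma mu_injective : Function.Injective (mu (n := n)) := by
  intro s t hst
  funext i
  have hi := i.isLt
  have hlt : 2 * i.val < n := by omega
  set b : Fin n := ⟨2 * i.val, hlt⟩ with hb
  have hbval : b.val = 2 * i.val := rfl
  have hbv : b.val / 2 = i.val := by omega
  have hlt2 : b.val / 2 < n / 2 := by omega
  have heq : swf s b = swf t b := by
    have := congrArg (fun μ : Equiv.Perm (Fin n) => μ b) hst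
    simpa [mu_apply] using this
  have hptn : (ptn n b).val = 2 * i.val + 1 := by
    have h := ptn_val b
    have h2 : b.val % 2 = 0 := by omega
    have h3 : b.val + 1 < n := by omega
    rw [if_pos h2, if_pos h3] at h
    omega
  have hne : ptn n b ≠ b := by
    intro hcon
    rw [hcon, hbval] at hptn
    omega
  have hidx : (⟨b.val / 2, hlt2⟩ : Fin (n / 2)) = i := Fin.ext hbv
  unfold swf at heq
  simp only [dif_pos hlt2, hidx] at heq
  by_cases hs : s i <;> by_cases ht : t i
  · simp [hs, ht]
  · rw [if_pos hs, if_neg ht] at heq; exact absurd heq hne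
  · rw [if_neg hs, if_pos ht] at heq; exact absurd heq.symm hne
  · simp [hs, ht]

end Main


/-- For every `n` there exists a stable matching instance with `n` boys and `n`
girls having at least `2 ^ ⌊n/2⌋` stable matchings. -/
theorem exists_instance_many_stable_matchings (n : ℕ) :
    ∃ I : SMInst n, 2 ^ (n / 2) ≤ Nat.card {μ : Equiv.Perm (Fin n) // I.Stable μ} := by
  rcases n with _ | m
  · refine ⟨⟨fun b => b.elim0, fun g => g.elim0, fun b => b.elim0, fun g => g.elim0⟩, ?_⟩
    have hne : Nonempty {μ : Equiv.Perm (Fin 0) // SMInst.Stable ⟨fun b => b.elim0, fun g => g.elim0, fun b => b.elim0, fun g => g.elim0⟩ μ} :=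
      ⟨⟨1, fun b => b.elim0⟩⟩
    simpa using Nat.card_pos (α := {μ : Equiv.Perm (Fin 0) // SMInst.Stable ⟨fun b => b.elim0, fun g => g.elim0, fun b => b.elim0, fun g => g.elim0⟩ μ})
  · set n := m + 1
    refine ⟨blockInst n, ?_⟩
    have hinj : Function.Injective
        (fun s : Fin (n / 2) → Bool => (⟨mu s, mu_stable s⟩ :
          {μ : Equiv.Perm (Fin n) // (blockInst n).Stable μ})) := by
      intro s t h
      exact mu_injective (Subtype.mk_eq_mk.mp h)
    have := Nat.card_le_card_of_injective _ hinj
    simpa [Nat.card_eq_fintype_card] using this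
end

section
/- A coalition F of girls is winning (i.e., the unique stable matching giving every girl in F her best stable partner is the girl-optimal stable matching) if and only if F contains at least one girl from every minimal rotation of the rotation poset; equivalently, F intersects the set U_ℓ of girls not matched to their best stable partner in μ_ℓ, for every minimal element μ_ℓ of the poset of stable matchings excluding the girl-optimal matching. -/
open Finset in
private lemma opposition {n : ℕ} (I : SMInst n) {μ ν : Equiv.Perm (Fin n)}
    (hμ : I.Stable μ) (h : ∀ b, I.rB b (ν b) ≤ I.rB b (μ b)) (g : Fin n) :
    I.rG g (μ.symm g) ≤ I.rG g (ν.symm g) := by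
  by_contra hlt
  push_neg at hlt
  set b := ν.symm g with hbdef
  have hb : ν b = g := ν.apply_symm_apply g
  have hnb := hμ b g
  unfold SMInst.Blocking at hnb
  push_neg at hnb
  have h1 : I.rB b (μ b) ≤ I.rB b g := le_of_not_gt (fun hA => absurd hlt (not_lt.mpr (hnb hA)))
  have h2 : I.rB b (ν b) ≤ I.rB b (μ b) := h b
  rw [hb] at h2
  have heq : I.rB b g = I.rB b (μ b) := le_antisymm h2 h1
  have : g = μ b := I.hB b heq
  have : μ.symm g = b := by rw [this, Equiv.symm_apply_apply]
  rw [this] at hlt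
  exact lt_irrefl _ hlt

private lemma exists_minimal_above {n : ℕ} (I : SMInst n)
    (μ0 ν : Equiv.Perm (Fin n)) (hν : I.Stable ν) (hne : ν ≠ μ0) :
    ∃ μ : Equiv.Perm (Fin n), I.MinimalAboveOpt μ0 μ ∧
      ∀ b, I.rB b (ν b) ≤ I.rB b (μ b) := by
  classical
  set A : Finset (Equiv.Perm (Fin n)) :=
    Finset.univ.filter
      (fun ρ => I.Stable ρ ∧ ρ ≠ μ0 ∧ ∀ b, I.rB b (ν b) ≤ I.rB b (ρ b)) with hA
  have hmemA : ∀ ρ, ρ ∈ A ↔ I.Stable ρ ∧ ρ ≠ μ0 ∧ ∀ b, I.rB b (ν b) ≤ I.rB b (ρ b) := by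
    intro ρ; simp [hA]
  have hνA : ν ∈ A := (hmemA ν).mpr ⟨hν, hne, fun b => le_refl _⟩
  obtain ⟨μ, hμA, hμmax⟩ :=
    A.exists_max_image (fun ρ => ∑ b, (I.rB b (ρ b) : ℕ)) ⟨ν, hνA⟩
  obtain ⟨hμS, hμne, hμge⟩ := (hmemA μ).mp hμA
  refine ⟨μ, ⟨hμS, hμne, ?_⟩, hμge⟩
  intro ρ hρS hρne hρge
  have hρA : ρ ∈ A := (hmemA ρ).mpr ⟨hρS, hρne, fun b => le_trans (hμge b) (hρge b)⟩
  have hsum : ∑ b, (I.rB b (ρ b) : ℕ) ≤ ∑ b, (I.rB b (μ b) : ℕ) := hμmax ρ hρA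
  have hsum' : ∑ b, (I.rB b (μ b) : ℕ) ≤ ∑ b, (I.rB b (ρ b) : ℕ) :=
    Finset.sum_le_sum (fun b _ => by exact_mod_cast hρge b)
  have hsumeq : ∑ b, (I.rB b (μ b) : ℕ) = ∑ b, (I.rB b (ρ b) : ℕ) :=
    le_antisymm hsum' hsum
  have hall := (Finset.sum_eq_sum_iff_of_le
    (fun b _ => by exact_mod_cast hρge b)).mp hsumeq
  ext b
  have : (I.rB b (μ b) : ℕ) = (I.rB b (ρ b) : ℕ) := hall b (Finset.mem_univ b)
  exact congrArg Fin.val (I.hB b (Fin.val_injective this)).symm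

/-- A coalition `F` of girls is winning if and only if it contains at least one girl
from every minimal rotation, equivalently iff `F` intersects the set of girls not
matched to their best stable partner in `μ`, for every minimal element `μ` of the
poset of stable matchings excluding the girl-optimal matching `μ0`. -/
theorem winning_iff_meets_every_minimal {n : ℕ} (I : SMInst n)
    (μ0 : Equiv.Perm (Fin n)) (hopt : I.GirlOptimal μ0) (F : Finset (Fin n)) :
    I.Winning μ0 F ↔
      ∀ μ : Equiv.Perm (Fin n), I.MinimalAboveOpt μ0 μ →
        ∃ g ∈ F, g ∈ I.U μ := by
  constructor
  · intro hw μ hμ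
    by_contra hc
    push_neg at hc
    have hmem : μ ∈ ({μ0} : Set (Equiv.Perm (Fin n))) := by
      rw [← hw]
      refine ⟨hμ.1, fun g hg => ?_⟩
      have := hc g hg
      simpa [SMInst.U] using this
    exact hμ.2.1 hmem
  · intro h
    unfold SMInst.Winning
    ext ν
    simp only [Set.mem_setOf_eq, Set.mem_singleton_iff]
    constructor
    · rintro ⟨hν, hF⟩
      by_contra hne
      obtain ⟨μ, hμmin, hμge⟩ := exists_minimal_above I μ0 ν hν hne
      obtain ⟨g, hgF, hgU⟩ := h μ hμmin
      apply hgU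
      have hbest := hF g hgF
      refine ⟨⟨μ, hμmin.1, μ.apply_symm_apply g⟩, fun ρ hρ => ?_⟩
      calc I.rG g (μ.symm g) ≤ I.rG g (ν.symm g) := opposition I hμmin.1 hμge g
        _ ≤ I.rG g (ρ.symm g) := hbest.2 ρ hρ
    · rintro rfl
      exact ⟨hopt.1, fun g _ =>
        ⟨⟨ν, hopt.1, ν.apply_symm_apply g⟩, fun ρ hρ => hopt.2 ρ hρ g⟩⟩
end

section
/- Let μ_1,...,μ_k be the minimal stable matchings in the poset of stable matchings ordered by the boys' preferences with the girl-optimal matching removed. Then the sets U_1,...,U_k, where U_ℓ is the set of girls not matched to their best stable partner in μ_ℓ, are pairwise disjoint and each has cardinality at least 2; consequently k ≤ ⌊n/2⌋. -/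
namespace SMInst
variable {n : ℕ} (I : SMInst n)

/-- key local lemma: if girl `g` strictly prefers her `μ`-partner to her `ν`-partner,
then her `μ`-partner strictly prefers his `ν`-partner (stability of `ν`). -/
lemma key1 {μ ν : Equiv.Perm (Fin n)} (hν : I.Stable ν) (g : Fin n)
    (h : I.rG g (μ.symm g) < I.rG g (ν.symm g)) :
    I.rB (μ.symm g) (ν (μ.symm g)) < I.rB (μ.symm g) (μ (μ.symm g)) := by
  set b := μ.symm g with hb
  have hbg : μ b = g := μ.apply_symm_apply g
  have hne : ν b ≠ μ b := by
    intro he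
    have : ν.symm g = b := by
      rw [← hbg, ← he, Equiv.symm_apply_apply]
    rw [this] at h
    exact lt_irrefl _ h
  have hnb : ¬ (I.rB b g < I.rB b (ν b)) := fun hh => hν b g ⟨hh, h⟩
  have hle : I.rB b (ν b) ≤ I.rB b g := not_lt.mp hnb
  rw [← hbg] at hle
  exact lt_of_le_of_ne hle (fun he => hne (I.hB b he))

/-- The meet of two stable matchings: each boy gets the worse of his two partners.
It is stable, below both matchings in the boys' order, and each girl's partner in it
is one of her two partners. -/
lemma exists_meet {μ ν : Equiv.Perm (Fin n)} (hμ : I.Stable μ) (hν : I.Stable ν) :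
    ∃ lam : Equiv.Perm (Fin n), I.Stable lam ∧
      (∀ b, I.rB b (μ b) ≤ I.rB b (lam b)) ∧
      (∀ b, I.rB b (ν b) ≤ I.rB b (lam b)) ∧
      (∀ g, lam.symm g = μ.symm g ∨ lam.symm g = ν.symm g) := by
  classical
  set f : Fin n → Fin n := fun b => if I.rB b (μ b) ≤ I.rB b (ν b) then ν b else μ b with hf
  set h : Fin n → Fin n :=
    fun g => if I.rG g (μ.symm g) ≤ I.rG g (ν.symm g) then μ.symm g else ν.symm g with hh
  have hfh : ∀ g, f (h g) = g := by
    intro g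
    by_cases hc : I.rG g (μ.symm g) ≤ I.rG g (ν.symm g)
    · have hhg : h g = μ.symm g := if_pos hc
      by_cases heq : μ.symm g = ν.symm g
      · rw [hhg, hf]
        simp only
        split
        · rw [heq, Equiv.apply_symm_apply]
        · rw [Equiv.apply_symm_apply]
      · have hlt : I.rG g (μ.symm g) < I.rG g (ν.symm g) :=
          lt_of_le_of_ne hc (fun he => heq (I.hG g he))
        have := I.key1 hν g hlt
        rw [hhg, hf]
        simp only
        rw [if_neg (not_le.mpr this), Equiv.apply_symm_apply]
    · have hlt : I.rG g (ν.symm g) < I.rG g (μ.symm g) := not_le.mp hc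
      have := I.key1 hμ g hlt
      have hhg : h g = ν.symm g := if_neg hc
      rw [hhg, hf]
      simp only
      rw [if_pos (le_of_lt this), Equiv.apply_symm_apply]
  have hinj : Function.Injective h := by
    intro a b e
    rw [← hfh a, ← hfh b, e]
  have hbij : Function.Bijective h := Finite.injective_iff_bijective.mp hinj
  let e : Equiv.Perm (Fin n) := Equiv.ofBijective h hbij
  refine ⟨e.symm, ?_, ?_, ?_, ?_⟩
  · -- stability
    intro b g hblock
    obtain ⟨h1, h2⟩ := hblock
    have hsymm : e.symm.symm g = h g := rfl
    rw [hsymm] at h2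
    have hlamb : e.symm b = f b := by
      have hb : h (e.symm b) = b := e.apply_symm_apply b
      calc e.symm b = f (h (e.symm b)) := (hfh _).symm
        _ = f b := by rw [hb]
    rw [hlamb] at h1
    have hgle : I.rG g (h g) ≤ I.rG g (μ.symm g) ∧ I.rG g (h g) ≤ I.rG g (ν.symm g) := by
      rw [hh]
      simp only
      split
      · exact ⟨le_refl _, by assumption⟩
      · exact ⟨le_of_lt (not_le.mp (by assumption)), le_refl _⟩
    by_cases hc : I.rB b (μ b) ≤ I.rB b (ν b)
    · have : f b = ν b := if_pos hc
      rw [this] at h1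
      exact hν b g ⟨h1, lt_of_lt_of_le h2 hgle.2⟩
    · have : f b = μ b := if_neg hc
      rw [this] at h1
      exact hμ b g ⟨h1, lt_of_lt_of_le h2 hgle.1⟩
  · intro b
    have hlamb : e.symm b = f b := by
      have hb : h (e.symm b) = b := e.apply_symm_apply b
      calc e.symm b = f (h (e.symm b)) := (hfh _).symm
        _ = f b := by rw [hb]
    rw [hlamb, hf]
    simp only
    split
    · assumption
    · exact le_refl _
  · intro b
    have hlamb : e.symm b = f b := by
      have hb : h (e.symm b) = b := e.apply_symm_apply b
      calc e.symm b = f (h (e.symm b)) := (hfh _).symm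
        _ = f b := by rw [hb]
    rw [hlamb, hf]
    simp only
    split
    · exact le_refl _
    · exact le_of_lt (not_le.mp (by assumption))
  · intro g
    have : e.symm.symm g = h g := rfl
    rw [this, hh]
    simp only
    split
    · exact Or.inl rfl
    · exact Or.inr rfl

lemma best_opt {μ0 : Equiv.Perm (Fin n)} (hopt : I.GirlOptimal μ0) (g : Fin n) :
    I.IsBestPartner g (μ0.symm g) :=
  ⟨⟨μ0, hopt.1, μ0.apply_symm_apply g⟩, fun μ' hs => hopt.2 μ' hs g⟩

lemma best_unique {μ0 : Equiv.Perm (Fin n)} (hopt : I.GirlOptimal μ0) {g b : Fin n}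
    (hb : I.IsBestPartner g b) : b = μ0.symm g := by
  have h1 : I.rG g b ≤ I.rG g (μ0.symm g) := hb.2 μ0 hopt.1
  have h2 : I.rG g (μ0.symm g) ≤ I.rG g b := by
    obtain ⟨μ', hs, he⟩ := hb.1
    have hsb : μ'.symm g = b := by rw [← he, Equiv.symm_apply_apply]
    have := hopt.2 μ' hs g
    rwa [hsb] at this
  exact I.hG g (le_antisymm h1 h2)

lemma U_eq {μ0 μ : Equiv.Perm (Fin n)} (hopt : I.GirlOptimal μ0) :
    I.U μ = {g | μ.symm g ≠ μ0.symm g} := by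
  ext g
  simp only [U, Set.mem_setOf_eq]
  constructor
  · intro hnb he
    exact hnb (he ▸ I.best_opt hopt g)
  · intro hne hb
    exact hne (I.best_unique hopt hb)

end SMInst

/-- For the minimal stable matchings of the poset of stable matchings (boys' order)
with the girl-optimal matching removed, the sets of girls not matched to their best
stable partner are pairwise disjoint and each has cardinality at least 2;
consequently there are at most `⌊n/2⌋` minimal stable matchings. -/
theorem minimal_matchings_disjoint_and_few {n : ℕ} (I : SMInst n)
    (μ0 : Equiv.Perm (Fin n)) (hopt : I.GirlOptimal μ0) :
    (∀ μ ν : Equiv.Perm (Fin n), I.MinimalAboveOpt μ0 μ → I.MinimalAboveOpt μ0 ν →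
      μ ≠ ν → Disjoint (I.U μ) (I.U ν)) ∧
    (∀ μ : Equiv.Perm (Fin n), I.MinimalAboveOpt μ0 μ → 2 ≤ (I.U μ).ncard) ∧
    {μ : Equiv.Perm (Fin n) | I.MinimalAboveOpt μ0 μ}.ncard ≤ n / 2 := by
  classical
  have hdisj : ∀ μ ν : Equiv.Perm (Fin n), I.MinimalAboveOpt μ0 μ → I.MinimalAboveOpt μ0 ν →
      μ ≠ ν → Disjoint (I.U μ) (I.U ν) := by
    intro μ ν hμ hν hne
    obtain ⟨lam, hls, hlμ, hlν, hlsym⟩ := I.exists_meet hμ.1 hν.1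
    have hlam0 : lam = μ0 := by
      by_contra hl0
      have h1 : lam = μ := hμ.2.2 lam hls hl0 hlμ
      have h2 : lam = ν := hν.2.2 lam hls hl0 hlν
      exact hne (h1 ▸ h2)
    rw [Set.disjoint_left]
    intro g hgμ hgν
    rw [I.U_eq hopt] at hgμ hgν
    rcases hlsym g with h | h <;> rw [hlam0] at h
    · exact hgμ h.symm
    · exact hgν h.symm
  have hcard : ∀ μ : Equiv.Perm (Fin n), I.MinimalAboveOpt μ0 μ → 2 ≤ (I.U μ).ncard := by
    intro μ hμ
    rw [I.U_eq hopt]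
    obtain ⟨g, hg⟩ : ∃ g, μ.symm g ≠ μ0.symm g := by
      by_contra hc
      push_neg at hc
      have h2 : μ.symm = μ0.symm := Equiv.ext hc
      have h3 := congrArg Equiv.symm h2
      simp only [Equiv.symm_symm] at h3
      exact hμ.2.1 h3
    set g' := μ (μ0.symm g) with hg'
    have hms : μ.symm g' = μ0.symm g := by rw [hg', Equiv.symm_apply_apply]
    have hgg' : g' ≠ g := by
      intro he
      apply hg
      rw [he] at hms
      rw [hms]
    have hg'mem : μ.symm g' ≠ μ0.symm g' := by
      intro he
      apply hgg'
      have h4 : μ0.symm g' = μ0.symm g := by rw [← he, hms]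
      exact μ0.symm.injective h4
    have hfin : ({g | μ.symm g ≠ μ0.symm g} : Set (Fin n)).Finite := Set.toFinite _
    rw [show (2:ℕ) = 1 + 1 from rfl]
    rw [Nat.succ_le_iff]
    rw [Set.one_lt_ncard_iff hfin]
    exact ⟨g, g', hg, hg'mem, (fun h => hgg' h.symm)⟩
  refine ⟨hdisj, hcard, ?_⟩
  set M : Set (Equiv.Perm (Fin n)) := {μ | I.MinimalAboveOpt μ0 μ} with hM
  have hMfin : M.Finite := Set.toFinite _
  set M' : Finset (Equiv.Perm (Fin n)) := hMfin.toFinset with hM'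
  have hUcard : ∀ μ ∈ M', 2 ≤ ((I.U μ).toFinite.toFinset).card := by
    intro μ hμ
    rw [← Set.ncard_eq_toFinset_card]
    exact hcard μ (hMfin.mem_toFinset.mp hμ)
  have hkey : M'.card * 2 ≤ n := by
    calc M'.card * 2 = ∑ _μ ∈ M', 2 := by rw [Finset.sum_const, smul_eq_mul]
      _ ≤ ∑ μ ∈ M', ((I.U μ).toFinite.toFinset).card := Finset.sum_le_sum hUcard
      _ = (M'.biUnion (fun μ => (I.U μ).toFinite.toFinset)).card := by
          rw [Finset.card_biUnion]
          intro μ hμ ν hν hne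
          simp only [Function.onFun]
          rw [Set.Finite.disjoint_toFinset]
          exact hdisj μ ν (hMfin.mem_toFinset.mp hμ) (hMfin.mem_toFinset.mp hν) hne
      _ ≤ (Finset.univ : Finset (Fin n)).card := Finset.card_le_card (Finset.subset_univ _)
      _ = n := by simp
  have : M.ncard = M'.card := Set.ncard_eq_toFinset_card M hMfin
  rw [hM] at this
  rw [this]
  exact Nat.le_div_iff_mul_le (by norm_num) |>.mpr hkey
end

section
/- For every n and every integer k with 0 ≤ k ≤ ⌊n/2⌋, there exists a stable matching instance with n boys and n girls in which the minimum winning coalition has cardinality exactly k. -/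
namespace MWCaux
open Function

variable (m k : ℕ)

/-- the block-partner map: swaps `2i ↔ 2i+1` for `i < k`, identity elsewhere. -/
def piF (hkn : 2*k ≤ m+1) (x : Fin (m+1)) : Fin (m+1) :=
  if h : (x:ℕ) < 2*k then
    (if h2 : 2 ∣ (x:ℕ) then ⟨(x:ℕ)+1, by omega⟩ else ⟨(x:ℕ)-1, by omega⟩)
  else x

variable (hkn : 2*k ≤ m+1)

lemma piF_val (x : Fin (m+1)) : ((piF m k hkn x : Fin (m+1)) : ℕ) =
    if (x:ℕ) < 2*k then (if 2 ∣ (x:ℕ) then (x:ℕ)+1 else (x:ℕ)-1) else (x:ℕ) := by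
  unfold piF; split_ifs <;> simp_all

lemma piF_ge (x : Fin (m+1)) (h : ¬ (x:ℕ) < 2*k) : piF m k hkn x = x := by
  simp [piF, h]

lemma piF_lt (x : Fin (m+1)) (h : (x:ℕ) < 2*k) : ((piF m k hkn x : Fin (m+1)) : ℕ) < 2*k := by
  rw [piF_val]; split_ifs <;> omega

lemma piF_div (x : Fin (m+1)) (h : (x:ℕ) < 2*k) :
    ((piF m k hkn x : Fin (m+1)) : ℕ)/2 = (x:ℕ)/2 := by
  rw [piF_val]; split_ifs <;> omega

lemma piF_invol : Involutive (piF m k hkn) := by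
  intro x
  apply Fin.ext
  rw [piF_val, piF_val]
  have := x.isLt
  split_ifs <;> omega

lemma piF_eq_add (x : Fin (m+1)) (h : (x:ℕ) < 2*k) (he : 2 ∣ (x:ℕ)) :
    piF m k hkn x = x + 1 := by
  apply Fin.ext
  rw [piF_val, Fin.val_add_one_of_lt (by rw [Fin.lt_def, Fin.val_last]; omega)]
  simp only [h, he, if_true]

lemma piF_eq_sub (x : Fin (m+1)) (h : (x:ℕ) < 2*k) (ho : ¬ 2 ∣ (x:ℕ)) :
    x = piF m k hkn x + 1 := by
  apply Fin.ext
  rw [Fin.val_add_one_of_lt (by rw [Fin.lt_def, Fin.val_last, piF_val]; have := x.isLt; split_ifs <;> omega)]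
  rw [piF_val]
  simp only [h, ho, if_true, if_false]
  omega

lemma val_one (h2 : 1 ≤ m) : ((1 : Fin (m+1)) : ℕ) = 1 := by
  rw [Fin.val_one']
  exact Nat.mod_eq_of_lt (by omega)

/-- The instance. -/
def inst : SMInst (m+1) where
  rB b g := if 2 ∣ (b:ℕ) then g - b else b - g
  rG g b := if 2 ∣ (g:ℕ) ∧ (g:ℕ) < 2*k then piF m k hkn g - b else b - piF m k hkn g
  hB b := by
    intro x y hxy
    dsimp only at hxy
    split_ifs at hxy
    · exact sub_left_injective hxy
    · exact sub_right_injective hxy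
  hG g := by
    intro x y hxy
    dsimp only at hxy
    split_ifs at hxy
    · exact sub_right_injective hxy
    · exact sub_left_injective hxy

lemma rB_self (b : Fin (m+1)) : (inst m k hkn).rB b b = 0 := by
  simp only [inst]; split_ifs <;> simp

lemma rB_eq_zero_iff (b g : Fin (m+1)) : (inst m k hkn).rB b g = 0 ↔ g = b := by
  constructor
  · intro h
    exact (inst m k hkn).hB b (h.trans (rB_self m k hkn b).symm)
  · intro h; rw [h]; exact rB_self m k hkn b

lemma rB_pi (b : Fin (m+1)) (h : (b:ℕ) < 2*k) :
    (inst m k hkn).rB b (piF m k hkn b) = 1 := by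
  simp only [inst]
  by_cases he : 2 ∣ (b:ℕ)
  · rw [if_pos he, piF_eq_add m k hkn b h he, add_sub_cancel_left]
  · rw [if_neg he, sub_eq_iff_eq_add']
    exact piF_eq_sub m k hkn b h he

lemma rG_pi (g : Fin (m+1)) : (inst m k hkn).rG g (piF m k hkn g) = 0 := by
  simp only [inst]; split_ifs <;> simp

lemma rG_eq_zero_iff (g b : Fin (m+1)) :
    (inst m k hkn).rG g b = 0 ↔ b = piF m k hkn g := by
  constructor
  · intro h
    exact (inst m k hkn).hG g (h.trans (rG_pi m k hkn g).symm)
  · intro h; rw [h]; exact rG_pi m k hkn g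

lemma rG_self_block (g : Fin (m+1)) (h : (g:ℕ) < 2*k) :
    (inst m k hkn).rG g g = 1 := by
  simp only [inst]
  by_cases he : 2 ∣ (g:ℕ)
  · rw [if_pos ⟨he, h⟩, piF_eq_add m k hkn g h he, add_sub_cancel_left]
  · rw [if_neg (by tauto), sub_eq_iff_eq_add']
    exact piF_eq_sub m k hkn g h he

lemma rG_self_nonblock (g : Fin (m+1)) (h : ¬ (g:ℕ) < 2*k) :
    (inst m k hkn).rG g g = 0 := by
  simp only [inst]
  rw [if_neg (by tauto), piF_ge m k hkn g h, sub_self]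

/-- matching that swaps exactly the blocks selected by `c`. -/
def fC (c : ℕ → Bool) (x : Fin (m+1)) : Fin (m+1) :=
  if (x:ℕ) < 2*k ∧ c ((x:ℕ)/2) then piF m k hkn x else x

lemma fC_invol (c : ℕ → Bool) : Involutive (fC m k hkn c) := by
  intro x
  unfold fC
  by_cases h : (x:ℕ) < 2*k ∧ c ((x:ℕ)/2)
  · rw [if_pos h, if_pos ⟨piF_lt m k hkn x h.1, by rw [piF_div m k hkn x h.1]; exact h.2⟩]
    exact piF_invol m k hkn x
  · rw [if_neg h, if_neg h]

def muC (c : ℕ → Bool) : Equiv.Perm (Fin (m+1)) :=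
  Involutive.toPerm _ (fC_invol m k hkn c)

lemma muC_apply (c : ℕ → Bool) (x : Fin (m+1)) : muC m k hkn c x = fC m k hkn c x := rfl

lemma muC_symm_apply (c : ℕ → Bool) (x : Fin (m+1)) :
    (muC m k hkn c).symm x = fC m k hkn c x := rfl

/-- the girl-optimal matching: all blocks swapped. -/
def sigma : Equiv.Perm (Fin (m+1)) := muC m k hkn (fun _ => true)

lemma sigma_symm_apply (g : Fin (m+1)) : (sigma m k hkn).symm g = piF m k hkn g := by
  rw [sigma, muC_symm_apply]
  unfold fC
  by_cases h : (g:ℕ) < 2*k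
  · rw [if_pos ⟨h, rfl⟩]
  · rw [if_neg (by tauto), piF_ge m k hkn g h]

lemma sigma_apply (g : Fin (m+1)) : sigma m k hkn g = piF m k hkn g := by
  rw [show sigma m k hkn g = (sigma m k hkn).symm g from rfl, sigma_symm_apply]

lemma stable_muC (c : ℕ → Bool) : (inst m k hkn).Stable (muC m k hkn c) := by
  rintro b g ⟨h1, h2⟩
  rw [muC_apply] at h1
  rw [muC_symm_apply] at h2
  by_cases hb : (b:ℕ) < 2*k ∧ c ((b:ℕ)/2)
  · rw [show fC m k hkn c b = piF m k hkn b from if_pos hb, rB_pi m k hkn b hb.1] at h1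
    -- h1 : rB b g < 1, so rB b g = 0, so g = b
    have hm2 : 2 ≤ m+1 := by omega
    have h0 : (inst m k hkn).rB b g = 0 := by
      rw [Fin.lt_def, val_one m (by omega)] at h1
      apply Fin.ext
      simp only [Fin.val_zero]
      omega
    rw [rB_eq_zero_iff] at h0
    subst h0
    rw [show fC m k hkn c g = piF m k hkn g from if_pos hb, rG_pi] at h2
    exact Fin.not_lt_zero _ h2
  · rw [show fC m k hkn c b = b from if_neg hb, rB_self] at h1
    exact Fin.not_lt_zero _ h1

lemma stable_sigma : (inst m k hkn).Stable (sigma m k hkn) :=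
  stable_muC m k hkn _

lemma stable_fix (μ : Equiv.Perm (Fin (m+1))) (hμ : (inst m k hkn).Stable μ)
    (g : Fin (m+1)) (h : ¬ (g:ℕ) < 2*k) : μ.symm g = g := by
  by_contra hne
  refine hμ g g ⟨?_, ?_⟩
  · rw [rB_self, Fin.pos_iff_ne_zero]
    intro h0
    rw [rB_eq_zero_iff] at h0
    exact hne ((Equiv.symm_apply_eq μ).2 h0.symm)
  · rw [rG_self_nonblock m k hkn g h, Fin.pos_iff_ne_zero]
    intro h0
    rw [rG_eq_zero_iff] at h0
    exact hne (h0.trans (piF_ge m k hkn g h))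

lemma stable_block (μ : Equiv.Perm (Fin (m+1))) (hμ : (inst m k hkn).Stable μ)
    (g : Fin (m+1)) (h : (g:ℕ) < 2*k) :
    μ.symm g = piF m k hkn g ∨ μ.symm g = g := by
  by_contra hne
  push_neg at hne
  obtain ⟨hn1, hn2⟩ := hne
  refine hμ g g ⟨?_, ?_⟩
  · rw [rB_self, Fin.pos_iff_ne_zero]
    intro h0
    rw [rB_eq_zero_iff] at h0
    exact hn2 ((Equiv.symm_apply_eq μ).2 h0.symm)
  · rw [rG_self_block m k hkn g h]
    have hm2 : 2 ≤ m+1 := by omega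
    have e0 : ((inst m k hkn).rG g (μ.symm g) : ℕ) ≠ 0 := by
      intro hh
      exact hn1 ((rG_eq_zero_iff m k hkn g _).1 (Fin.ext (by simp [hh])))
    have e1 : ((inst m k hkn).rG g (μ.symm g) : ℕ) ≠ 1 := by
      intro hh
      have : (inst m k hkn).rG g (μ.symm g) = (inst m k hkn).rG g g := by
        rw [rG_self_block m k hkn g h]
        apply Fin.ext
        rw [hh]
        exact (val_one m (by omega)).symm
      exact hn2 ((inst m k hkn).hG g this)
    rw [Fin.lt_def, val_one m (by omega)]
    omega

lemma isBest_iff (g b : Fin (m+1)) :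
    (inst m k hkn).IsBestPartner g b ↔ b = piF m k hkn g := by
  constructor
  · rintro ⟨-, h2⟩
    have := h2 _ (stable_muC m k hkn (fun _ => true))
    rw [show muC m k hkn (fun _ => true) = sigma m k hkn from rfl, sigma_symm_apply,
      rG_pi, Fin.le_zero_iff, rG_eq_zero_iff] at this
    exact this
  · rintro rfl
    refine ⟨⟨sigma m k hkn, stable_muC m k hkn _, ?_⟩, fun μ hμ => ?_⟩
    · rw [show piF m k hkn g = (sigma m k hkn).symm g from (sigma_symm_apply m k hkn g).symm,
        Equiv.apply_symm_apply]
    · rw [rG_pi]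
      exact Fin.zero_le _

lemma eq_sigma (μ : Equiv.Perm (Fin (m+1))) (hμ : (inst m k hkn).Stable μ)
    (hbest : ∀ i, (hi : i < k) → μ.symm ⟨2*i, by omega⟩ = piF m k hkn ⟨2*i, by omega⟩) :
    μ = sigma m k hkn := by
  have hsymm : ∀ g, μ.symm g = (sigma m k hkn).symm g := by
    intro g
    rw [sigma_symm_apply]
    by_cases h : (g:ℕ) < 2*k
    · by_cases he : 2 ∣ (g:ℕ)
      · have hg : g = ⟨2*((g:ℕ)/2), by have := g.isLt; omega⟩ := Fin.ext (by simp; omega)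
        rw [hg]
        exact hbest _ (by omega)
      · -- odd block girl
        set a : Fin (m+1) := ⟨2*((g:ℕ)/2), by have := g.isLt; omega⟩ with ha
        have hpa : piF m k hkn a = g := by
          apply Fin.ext
          rw [piF_val]
          have : ((a:Fin (m+1)):ℕ) = 2*((g:ℕ)/2) := rfl
          rw [this]
          have := g.isLt
          split_ifs <;> omega
        have hma : μ.symm a = g := by rw [hbest _ (by omega), hpa]
        rcases stable_block m k hkn μ hμ g h with h' | h'
        · exact h'
        · exfalso
          have : a = g := μ.symm.injective (by rw [hma, h'])
          have := congrArg Fin.val this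
          simp only [ha] at this
          omega
    · rw [piF_ge m k hkn g h]
      exact stable_fix m k hkn μ hμ g h
  have : μ.symm = (sigma m k hkn).symm := Equiv.ext hsymm
  calc μ = μ.symm.symm := (Equiv.symm_symm μ).symm
    _ = (sigma m k hkn).symm.symm := by rw [this]
    _ = sigma m k hkn := Equiv.symm_symm _

end MWCaux

/-- For every `n` and every `k ≤ ⌊n/2⌋` there exists a stable matching instance with
`n` boys and `n` girls in which the minimum winning coalition has cardinality
exactly `k`. -/
theorem exists_instance_min_winning_coalition (n k : ℕ) (hk : k ≤ n / 2) :
    ∃ (I : SMInst n) (μ0 : Equiv.Perm (Fin n)), I.GirlOptimal μ0 ∧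
      (∃ F : Finset (Fin n), I.Winning μ0 F ∧ F.card = k) ∧
      (∀ F : Finset (Fin n), I.Winning μ0 F → k ≤ F.card) := by
  classical
  rcases n with _ | m
  · -- n = 0
    have hk0 : k = 0 := by omega
    subst hk0
    refine ⟨⟨fun b => b.elim0, fun g => g.elim0, fun b => b.elim0, fun g => g.elim0⟩, 1,
      ⟨fun b g hb => b.elim0, fun μ _ g => g.elim0⟩, ⟨∅, ?_, rfl⟩, fun F _ => Nat.zero_le _⟩
    unfold SMInst.Winning
    ext μ
    simp only [Set.mem_setOf_eq, Set.mem_singleton_iff]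
    constructor
    · intro _
      exact Equiv.ext fun x => x.elim0
    · rintro rfl
      exact ⟨fun b g hb => b.elim0, fun g hg => g.elim0⟩
  · have hkn : 2*k ≤ m+1 := by omega
    set F0 : Finset (Fin (m+1)) :=
      Finset.image (fun i : Fin k => (⟨2*(i:ℕ), by have := i.isLt; omega⟩ : Fin (m+1)))
        Finset.univ with hF0
    refine ⟨MWCaux.inst m k hkn, MWCaux.sigma m k hkn,
      ⟨MWCaux.stable_sigma m k hkn, fun μ hμ g => ?_⟩, ⟨F0, ?_, ?_⟩, ?_⟩
    · -- girl-optimality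
      rw [MWCaux.sigma_symm_apply, MWCaux.rG_pi]
      exact Fin.zero_le _
    · -- F0 is winning
      unfold SMInst.Winning
      rw [Set.eq_singleton_iff_unique_mem]
      constructor
      · refine ⟨MWCaux.stable_sigma m k hkn, fun g hg => ?_⟩
        rw [MWCaux.isBest_iff, MWCaux.sigma_symm_apply]
      · rintro μ ⟨hst, hb⟩
        apply MWCaux.eq_sigma m k hkn μ hst
        intro i hi
        have hmem : (⟨2*i, by omega⟩ : Fin (m+1)) ∈ F0 := by
          rw [hF0]
          exact Finset.mem_image.2 ⟨⟨i, hi⟩, Finset.mem_univ _, rfl⟩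
        have h2 := hb _ hmem
        rwa [MWCaux.isBest_iff] at h2
    · -- card F0 = k
      rw [hF0, Finset.card_image_of_injective _ ?_, Finset.card_univ, Fintype.card_fin]
      intro i j hij
      have h3 := congrArg Fin.val hij
      simp only at h3
      exact Fin.ext (by omega)
    · -- lower bound
      intro F hF
      have key : ∀ i, i < k → ∃ g ∈ F, (g:ℕ)/2 = i ∧ (g:ℕ) < 2*k := by
        intro i hi
        by_contra hno
        push_neg at hno
        have hmem : MWCaux.muC m k hkn (fun j => decide (j ≠ i)) ∈
            {μ : Equiv.Perm (Fin (m+1)) | (MWCaux.inst m k hkn).Stable μ ∧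
              ∀ g ∈ F, (MWCaux.inst m k hkn).IsBestPartner g (μ.symm g)} := by
          refine ⟨MWCaux.stable_muC m k hkn _, fun g hg => ?_⟩
          rw [MWCaux.isBest_iff, MWCaux.muC_symm_apply]
          unfold MWCaux.fC
          by_cases h : (g:ℕ) < 2*k
          · rw [if_pos ⟨h, by
              rw [decide_eq_true_eq]
              intro hh
              exact absurd h (Nat.not_lt.2 (hno g hg hh))⟩]
          · rw [if_neg (by tauto), MWCaux.piF_ge m k hkn g h]
        rw [SMInst.Winning] at hF
        rw [hF] at hmem
        have heq : MWCaux.muC m k hkn (fun j => decide (j ≠ i)) = MWCaux.sigma m k hkn := hmem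
        have h1 := congrArg (fun μ : Equiv.Perm (Fin (m+1)) =>
          μ (⟨2*i, by omega⟩ : Fin (m+1))) heq
        rw [MWCaux.muC_apply, MWCaux.sigma_apply] at h1
        unfold MWCaux.fC at h1
        rw [if_neg (by
          rintro ⟨-, hc⟩
          rw [decide_eq_true_eq] at hc
          exact hc (by simp only [Fin.val_mk]; omega))] at h1
        have h4 := congrArg Fin.val h1
        rw [MWCaux.piF_val] at h4
        simp only [Fin.val_mk] at h4
        split_ifs at h4 <;> omega
      have hsub : Finset.range k ⊆ F.image (fun g : Fin (m+1) => (g:ℕ)/2) := by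
        intro j hj
        rw [Finset.mem_range] at hj
        obtain ⟨g, hg, hgj, -⟩ := key j hj
        exact Finset.mem_image.2 ⟨g, hg, hgj⟩
      calc k = (Finset.range k).card := (Finset.card_range k).symm
        _ ≤ (F.image (fun g : Fin (m+1) => (g:ℕ)/2)).card := Finset.card_le_card hsub
        _ ≤ F.card := Finset.card_image_le
end
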